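/- arXiv:1001.0379 — 10 statements merged into one kernel-verified Lean document; each statement's English description precedes it below -/
import Mathlib

section
/- Let 𝔪 be a Lie algebra over a field k of characteristic 0, graded by negative integers, 𝔪 = ⊕_{i≥1} 𝔪_{-i}, generated by 𝔪_{-1}, and assume 𝔪 is non-degenerate (i.e., no non-zero element of 𝔪_{-1} lies in the center of 𝔪). If there exists a degree-preserving derivation d of 𝔪 with d(𝔪_{-i}) = 0 for all i ≥ 2 and rank d = 1 (as a linear map), then there exists a non-zero element y ∈ 𝔪_{-1} such that the adjoint map ad y : 𝔪 → 𝔪 has rank 1. -/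
open Module LinearMap

/-!
The rank-one derivation `d` has image `k ∙ y` with `y = d x` for some `x ∈ 𝔪_{-1}`, since `d` kills
`𝔪_{-i}` for `i ≥ 2`. Applying `d` to `⁅x, v⁆ ∈ 𝔪_{-1-i}` gives `⁅y, v⁆ = -⁅x, d v⁆`, which is
a multiple of `⁅x, y⁆` for `v ∈ 𝔪_{-1}` and zero for `v ∈ 𝔪_{-i}`, `i ≥ 2`. Hence the image of
`ad y` is `k ∙ ⁅x, y⁆`, and `⁅x, y⁆ ≠ 0` by non-degeneracy.
-/

theorem Submodule.exists_ne_zero_eq_span_singleton_of_finrank_eq_one {K V : Type*} [DivisionRing K]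
    [AddCommGroup V] [Module K V] {p : Submodule K V} (h : finrank K p = 1) :
    ∃ y ≠ 0, p = K ∙ y := by
  obtain ⟨v, hv, hspan⟩ := finrank_eq_one_iff'.mp h
  refine ⟨v, by simpa using hv,
    le_antisymm (fun w hw => ?_) (span_singleton_le_iff_mem _ _ |>.mpr v.2)⟩
  obtain ⟨c, hc⟩ := hspan ⟨w, hw⟩
  exact mem_span_singleton.mpr ⟨c, congrArg Subtype.val hc⟩

theorem LinearMap.range_eq_map_of_forall_eq_zero {R M N : Type*} [Semiring R] [AddCommMonoid M]
    [Module R M] [AddCommMonoid N] [Module R N] {m : ℕ → Submodule R M} (h0 : m 0 = ⊥)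
    (htop : iSup m = ⊤) (f : M →ₗ[R] N) (hf : ∀ i, 2 ≤ i → ∀ x ∈ m i, f x = 0) :
    range f = (m 1).map f := by
  refine le_antisymm ?_ LinearMap.map_le_range
  rw [← Submodule.map_top, ← htop, Submodule.map_iSup]
  refine iSup_le fun i => ?_
  match i with
  | 0 => simp [h0]
  | 1 => exact le_rfl
  | n + 2 =>
    exact Submodule.map_le_iff_le_comap.mpr fun x hx => by simp [hf (n + 2) (by omega) x hx]

section Derivation

variable {k L : Type*} [CommRing k] [LieRing L] [LieAlgebra k L] {d : L →ₗ[k] L}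

theorem lie_apply_eq_neg_lie_apply_of_apply_lie_eq_zero
    (hder : ∀ a b : L, d ⁅a, b⁆ = ⁅d a, b⁆ + ⁅a, d b⁆) {x v : L} (hxv : d ⁅x, v⁆ = 0) :
    ⁅d x, v⁆ = -⁅x, d v⁆ :=
  eq_neg_of_add_eq_zero_left (hder x v ▸ hxv)

theorem lie_apply_mem_span_lie_of_apply_lie_eq_zero
    (hder : ∀ a b : L, d ⁅a, b⁆ = ⁅d a, b⁆ + ⁅a, d b⁆) {x v : L} (hxv : d ⁅x, v⁆ = 0)
    (hv : d v ∈ k ∙ d x) : ⁅d x, v⁆ ∈ k ∙ ⁅x, d x⁆ := by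
  obtain ⟨c, hc⟩ := Submodule.mem_span_singleton.mp hv
  rw [lie_apply_eq_neg_lie_apply_of_apply_lie_eq_zero hder hxv, ← hc, lie_smul, ← neg_smul]
  exact Submodule.smul_mem _ _ (Submodule.mem_span_singleton_self _)

end Derivation

theorem stmt0_general {k L : Type*} [Field k] [LieRing L] [LieAlgebra k L]
    (m : ℕ → Submodule k L)
    (hsum : DirectSum.IsInternal fun i => m i)
    (h0 : m 0 = ⊥)
    (hbr : ∀ i j, ∀ x ∈ m i, ∀ y ∈ m j, ⁅x, y⁆ ∈ m (i + j))
    (hnd : ∀ y ∈ m 1, (∀ z : L, ⁅y, z⁆ = 0) → y = 0)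
    (d : L →ₗ[k] L)
    (hder : ∀ a b : L, d ⁅a, b⁆ = ⁅d a, b⁆ + ⁅a, d b⁆)
    (hpres : ∀ i, ∀ x ∈ m i, d x ∈ m i)
    (hvan : ∀ i, 2 ≤ i → ∀ x ∈ m i, d x = 0)
    (hrk : finrank k (LinearMap.range d) = 1) :
    ∃ y ∈ m 1, y ≠ 0 ∧
      finrank k (LinearMap.range (LieAlgebra.ad k L y)) = 1 := by
  have htop := hsum.submodule_iSup_eq_top
  obtain ⟨y, hy0, hy⟩ := Submodule.exists_ne_zero_eq_span_singleton_of_finrank_eq_one hrk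
  obtain ⟨x, hx, rfl⟩ : y ∈ (m 1).map d := by
    rw [← range_eq_map_of_forall_eq_zero h0 htop d hvan, hy]
    exact Submodule.mem_span_singleton_self y
  have hy1 : d x ∈ m 1 := hpres 1 x hx
  have hvan_ad : ∀ i, 2 ≤ i → ∀ w ∈ m i, LieAlgebra.ad k L (d x) w = 0 := fun i hi w hw => by
    rw [LieAlgebra.ad_apply, lie_apply_eq_neg_lie_apply_of_apply_lie_eq_zero hder
      (hvan _ (by omega) _ (hbr 1 i x hx w hw)), hvan i hi w hw, lie_zero, neg_zero]
  have hle : range (LieAlgebra.ad k L (d x)) ≤ k ∙ ⁅x, d x⁆ := by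
    rw [range_eq_map_of_forall_eq_zero h0 htop _ hvan_ad, Submodule.map_le_iff_le_comap]
    exact fun v hv => lie_apply_mem_span_lie_of_apply_lie_eq_zero hder
      (hvan 2 le_rfl _ (hbr 1 1 x hx v hv)) (hy ▸ mem_range_self d v)
  have hz : ⁅x, d x⁆ ≠ 0 := fun hz => hy0 <| hnd _ hy1 fun w => by
    simpa [hz] using hle (mem_range_self _ w)
  have hrange : range (LieAlgebra.ad k L (d x)) = k ∙ ⁅x, d x⁆ :=
    le_antisymm hle (Submodule.span_singleton_le_iff_mem _ _ |>.mpr ⟨-x, by rw [LieAlgebra.ad_apply, lie_neg, ← lie_skew, neg_neg]⟩)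
  exact ⟨d x, hy1, hy0, by rw [hrange, finrank_span_singleton hz]⟩

/-- A non-degenerate graded nilpotent Lie algebra admitting a
degree-preserving derivation `d` vanishing on all `𝔪_{-i}`, `i ≥ 2`, of rank 1,
has an element `y ∈ 𝔪_{-1}`, `y ≠ 0`, with `rank (ad y) = 1`. -/
theorem stmt0 {k L : Type*} [Field k] [CharZero k] [LieRing L] [LieAlgebra k L]
    (m : ℕ → Submodule k L)
    (hsum : DirectSum.IsInternal fun i => m i)
    (h0 : m 0 = ⊥)
    (μ : ℕ) (hdepth : ∀ i, μ < i → m i = ⊥)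
    (hbr : ∀ i j, ∀ x ∈ m i, ∀ y ∈ m j, ⁅x, y⁆ ∈ m (i + j))
    (hgen : ∀ i, 1 ≤ i →
      m (i + 1) = Submodule.span k {z | ∃ u ∈ m 1, ∃ v ∈ m i, ⁅u, v⁆ = z})
    (hnd : ∀ y ∈ m 1, (∀ z : L, ⁅y, z⁆ = 0) → y = 0)
    (d : L →ₗ[k] L)
    (hder : ∀ a b : L, d ⁅a, b⁆ = ⁅d a, b⁆ + ⁅a, d b⁆)
    (hpres : ∀ i, ∀ x ∈ m i, d x ∈ m i)
    (hvan : ∀ i, 2 ≤ i → ∀ x ∈ m i, d x = 0)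
    (hrk : finrank k (LinearMap.range d) = 1) :
    ∃ y ∈ m 1, y ≠ 0 ∧
      finrank k (LinearMap.range (LieAlgebra.ad k L y)) = 1 :=
  stmt0_general m hsum h0 hbr hnd d hder hpres hvan hrk
end

section
/- Let 𝔪 be a non-degenerate graded nilpotent Lie algebra over a field of characteristic 0, and suppose d is a degree-preserving derivation with d(𝔪_{-i}) = 0 for i ≥ 2 and rank d = 1. Choose x ∈ 𝔪_{-1} with d(x) = y ≠ 0. Then d(y) = 0; in particular d² = 0, so d is nilpotent. -/
open Module LinearMap

/-! Since `d` has rank one and `y = d x ≠ 0`, its image is the line `k ∙ y`, so `⁅y, d z⁆ = 0` for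
every `z`. For homogeneous `z` of positive degree, `⁅y, z⁆` has degree at least two, so the
derivation rule gives `⁅d y, z⁆ = d ⁅y, z⁆ - ⁅y, d z⁆ = 0`. Hence `d y ∈ 𝔪_{-1}` is central, and
non-degeneracy forces `d y = 0`. Then `d` kills its own image `k ∙ y`, i.e. `d ∘ d = 0`. -/

section

variable {R L : Type*} [CommRing R] [LieRing L] [LieAlgebra R L]

theorem lie_eq_zero_of_iSup_eq_top {ι : Type*} {m : ι → Submodule R L} (hm : ⨆ i, m i = ⊤)
    {a : L} (h : ∀ i, ∀ z ∈ m i, ⁅a, z⁆ = 0) (z : L) : ⁅a, z⁆ = 0 := by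
  have hker : ⊤ ≤ ker (LieAlgebra.ad R L a) := hm ▸ iSup_le fun i z hz => h i z hz
  exact hker (Submodule.mem_top (x := z))

theorem lie_apply_eq_zero_of_range_eq_span_singleton {d : L →ₗ[R] L} {y : L}
    (hd : range d = R ∙ y) (z : L) : ⁅y, d z⁆ = 0 := by
  obtain ⟨c, hc⟩ := Submodule.mem_span_singleton.1 (hd ▸ mem_range_self d z)
  rw [← hc, lie_smul, lie_self, smul_zero]

theorem lie_apply_eq_zero_of_forall_lie_apply_eq_zero {m : ℕ → Submodule R L}
    (hm : ⨆ i, m i = ⊤) (h0 : m 0 = ⊥)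
    (hbr : ∀ i j, ∀ x ∈ m i, ∀ y ∈ m j, ⁅x, y⁆ ∈ m (i + j))
    {d : L →ₗ[R] L} (hder : ∀ a b : L, d ⁅a, b⁆ = ⁅d a, b⁆ + ⁅a, d b⁆)
    (hvan : ∀ i, 2 ≤ i → ∀ x ∈ m i, d x = 0)
    {y : L} (hy : y ∈ m 1) (hyd : ∀ z, ⁅y, d z⁆ = 0) (z : L) : ⁅d y, z⁆ = 0 := by
  refine lie_eq_zero_of_iSup_eq_top hm (fun i z hz => ?_) z
  rcases i with _ | i
  · rw [h0, Submodule.mem_bot] at hz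
    rw [hz, lie_zero]
  · have h := hvan (1 + (i + 1)) (by omega) _ (hbr 1 (i + 1) y hy z hz)
    rwa [hder, hyd, add_zero] at h

end

theorem stmt1_general {k L : Type*} [Field k] [LieRing L] [LieAlgebra k L]
    (m : ℕ → Submodule k L)
    (hsum : DirectSum.IsInternal fun i => m i)
    (h0 : m 0 = ⊥)
    (hbr : ∀ i j, ∀ x ∈ m i, ∀ y ∈ m j, ⁅x, y⁆ ∈ m (i + j))
    (hnd : ∀ y ∈ m 1, (∀ z : L, ⁅y, z⁆ = 0) → y = 0)
    (d : L →ₗ[k] L)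
    (hder : ∀ a b : L, d ⁅a, b⁆ = ⁅d a, b⁆ + ⁅a, d b⁆)
    (hpres : ∀ i, ∀ x ∈ m i, d x ∈ m i)
    (hvan : ∀ i, 2 ≤ i → ∀ x ∈ m i, d x = 0)
    (hrk : finrank k (LinearMap.range d) = 1)
    (x y : L) (hx : x ∈ m 1) (hdx : d x = y) (hy : y ≠ 0) :
    d y = 0 ∧ d ∘ₗ d = 0 ∧ IsNilpotent d := by
  have hy1 : y ∈ m 1 := hdx ▸ hpres 1 x hx
  have hrange : range d = k ∙ y :=
    eq_span_singleton_of_mem_of_finrank_eq_one hrk ⟨x, hdx⟩ hy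
  have hdy : d y = 0 := hnd _ (hpres 1 y hy1) <| lie_apply_eq_zero_of_forall_lie_apply_eq_zero
    hsum.submodule_iSup_eq_top h0 hbr hder hvan hy1
    (lie_apply_eq_zero_of_range_eq_span_singleton hrange)
  have hdd : d ∘ₗ d = 0 :=
    range_le_ker_iff.1 (hrange ▸ (Submodule.span_singleton_le_iff_mem y _).2 hdy)
  exact ⟨hdy, hdd, 2, by rw [pow_two, Module.End.mul_eq_comp, hdd]⟩

/-- if `d` is a degree-preserving derivation of a non-degenerate
GNLA vanishing on `𝔪_{-i}`, `i ≥ 2`, of rank 1, and `x ∈ 𝔪_{-1}` with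
`d x = y ≠ 0`, then `d y = 0`; in particular `d² = 0`, so `d` is nilpotent. -/
theorem stmt1 {k L : Type*} [Field k] [CharZero k] [LieRing L] [LieAlgebra k L]
    (m : ℕ → Submodule k L)
    (hsum : DirectSum.IsInternal fun i => m i)
    (h0 : m 0 = ⊥)
    (μ : ℕ) (hdepth : ∀ i, μ < i → m i = ⊥)
    (hbr : ∀ i j, ∀ x ∈ m i, ∀ y ∈ m j, ⁅x, y⁆ ∈ m (i + j))
    (hgen : ∀ i, 1 ≤ i →
      m (i + 1) = Submodule.span k {z | ∃ u ∈ m 1, ∃ v ∈ m i, ⁅u, v⁆ = z})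
    (hnd : ∀ y ∈ m 1, (∀ z : L, ⁅y, z⁆ = 0) → y = 0)
    (d : L →ₗ[k] L)
    (hder : ∀ a b : L, d ⁅a, b⁆ = ⁅d a, b⁆ + ⁅a, d b⁆)
    (hpres : ∀ i, ∀ x ∈ m i, d x ∈ m i)
    (hvan : ∀ i, 2 ≤ i → ∀ x ∈ m i, d x = 0)
    (hrk : finrank k (LinearMap.range d) = 1)
    (x y : L) (hx : x ∈ m 1) (hdx : d x = y) (hy : y ≠ 0) :
    d y = 0 ∧ d ∘ₗ d = 0 ∧ IsNilpotent d :=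
  stmt1_general m hsum h0 hbr hnd d hder hpres hvan hrk x y hx hdx hy
end

section
/- Let 𝔪 be a non-degenerate graded nilpotent Lie algebra over a field of characteristic 0, and let y ∈ 𝔪_{-1} be such that rank(ad y) = 1. Then there exists a degree-preserving derivation d of 𝔪 with d(𝔪_{-i}) = 0 for all i ≥ 2 and rank d = 1. Specifically, choosing x ∈ 𝔪_{-1} with [x,y] ≠ 0 and writing 𝔪_{-1} = ⟨x⟩ ⊕ W where W = ker(ad y) ∩ 𝔪_{-1}, the linear map d defined by d(x) = y, d(W) = 0, d(𝔪_{-i}) = 0 for i ≥ 2 is a derivation of 𝔪. -/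
open Module LinearMap

/-!
Since `ad y` has rank one, its range is spanned by `v = ⁅y, x⁆`, so `⁅y, z⁆ = g z • v` for a
linear functional `g`, and `d := g(·) • y`. As `y` has degree 1 and `v` degree 2, `g` vanishes
outside `𝔪_{-1}`; in particular it kills the derived algebra, which lives in degrees `≥ 2`.
The Leibniz rule for `d` then reduces to
`g a • ⁅y, b⁆ + g b • ⁅a, y⁆ = (g a * g b - g b * g a) • v = 0`.
-/

theorem LinearMap.exists_apply_eq_smul_of_finrank_range_eq_one {K V W : Type*} [Field K]
    [AddCommGroup V] [Module K V] [AddCommGroup W] [Module K W] (f : V →ₗ[K] W)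
    (hf : finrank K (range f) = 1) {v : W} (hv : v ∈ range f) (hv0 : v ≠ 0) :
    ∃ g : V →ₗ[K] K, ∀ z, f z = g z • v := by
  have : Module.Finite K (range f) := Module.finite_of_finrank_eq_succ hf
  have hrange : range f = K ∙ v :=
    (Submodule.eq_of_le_of_finrank_le ((Submodule.span_singleton_le_iff_mem _ _).2 hv)
      (by rw [hf, finrank_span_singleton hv0])).symm
  refine ⟨(LinearEquiv.coord K W v hv0).toLinearMap ∘ₗ
    f.codRestrict (K ∙ v) (fun z => hrange ▸ mem_range_self f z), fun z => ?_⟩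
  exact (LinearEquiv.coord_apply_smul K W v hv0 ⟨f z, hrange ▸ mem_range_self f z⟩).symm

theorem LieAlgebra.smulRight_lie_of_lie_eq_smul {R L : Type*} [CommRing R] [LieRing L]
    [LieAlgebra R L] {y v : L} {g : L →ₗ[R] R} (hg : ∀ z : L, ⁅y, z⁆ = g z • v)
    (hg_lie : ∀ a b : L, g ⁅a, b⁆ = 0) (a b : L) :
    g.smulRight y ⁅a, b⁆ = ⁅g.smulRight y a, b⁆ + ⁅a, g.smulRight y b⁆ := by
  simp only [smulRight_apply, hg_lie, zero_smul, smul_lie, lie_smul, ← lie_skew a y, hg,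
    smul_neg, smul_smul, mul_comm (g b) (g a), add_neg_cancel]

theorem lie_apply_eq_zero_of_graded {R L M : Type*} [CommRing R] [LieRing L]
    [LieAlgebra R L] [AddCommGroup M] [Module R M] {m : ℕ → Submodule R L}
    (htop : ⨆ i, m i = ⊤) (h0 : m 0 = ⊥)
    (hbr : ∀ i j, ∀ x ∈ m i, ∀ y ∈ m j, ⁅x, y⁆ ∈ m (i + j)) {φ : L →ₗ[R] M}
    (hφ : ∀ n, 2 ≤ n → ∀ z ∈ m n, φ z = 0) (a b : L) : φ ⁅a, b⁆ = 0 := by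
  suffices Submodule.map₂ (LieModule.toEnd R L L : L →ₗ[R] L →ₗ[R] L) ⊤ ⊤ ≤ ker φ from
    this (Submodule.apply_mem_map₂ _ Submodule.mem_top Submodule.mem_top)
  rw [← htop, Submodule.map₂_iSup_left, iSup_le_iff]
  intro i
  rw [Submodule.map₂_iSup_right, iSup_le_iff]
  intro j
  rw [Submodule.map₂_le]
  intro a ha b hb
  rcases Nat.eq_zero_or_pos i with rfl | hi
  · simp [(Submodule.mem_bot R).1 (h0 ▸ ha)]
  rcases Nat.eq_zero_or_pos j with rfl | hj
  · simp [(Submodule.mem_bot R).1 (h0 ▸ hb)]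
  exact hφ (i + j) (by omega) _ (hbr i j a ha b hb)

theorem eq_zero_of_lie_eq_smul_of_graded {K L : Type*} [Field K] [LieRing L]
    [LieAlgebra K L] {m : ℕ → Submodule K L} (hind : iSupIndep m)
    (hbr : ∀ i j, ∀ x ∈ m i, ∀ y ∈ m j, ⁅x, y⁆ ∈ m (i + j))
    {p q : ℕ} {y v : L} (hy : y ∈ m p) (hv : v ∈ m q) (hv0 : v ≠ 0) {g : L →ₗ[K] K}
    (hg : ∀ z, ⁅y, z⁆ = g z • v) {n : ℕ} (hn : p + n ≠ q) {z : L} (hz : z ∈ m n) :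
    g z = 0 := by
  by_contra hgz
  have hv' : v ∈ m (p + n) := by
    rw [← inv_smul_smul₀ hgz v, ← hg z]
    exact Submodule.smul_mem _ _ (hbr p n y hy z hz)
  exact hv0 (Submodule.disjoint_def.1 (hind.pairwiseDisjoint hn) v hv' hv)

theorem stmt2_general {k L : Type*} [Field k] [LieRing L] [LieAlgebra k L]
    (m : ℕ → Submodule k L)
    (hsum : DirectSum.IsInternal fun i => m i)
    (h0 : m 0 = ⊥)
    (hbr : ∀ i j, ∀ x ∈ m i, ∀ y ∈ m j, ⁅x, y⁆ ∈ m (i + j))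
    (y : L) (hy : y ∈ m 1)
    (hrk : finrank k (LinearMap.range (LieAlgebra.ad k L y)) = 1)
    (x : L) (hx : x ∈ m 1) (hxy : ⁅x, y⁆ ≠ 0) :
    ∃ d : L →ₗ[k] L,
      (∀ a b : L, d ⁅a, b⁆ = ⁅d a, b⁆ + ⁅a, d b⁆) ∧
      (∀ i, ∀ z ∈ m i, d z ∈ m i) ∧
      (∀ i, 2 ≤ i → ∀ z ∈ m i, d z = 0) ∧
      finrank k (LinearMap.range d) = 1 ∧
      d x = y ∧
      (∀ w ∈ m 1, ⁅y, w⁆ = 0 → d w = 0) := by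
  have hv0 : ⁅y, x⁆ ≠ 0 := by rwa [← lie_skew, neg_ne_zero]
  obtain ⟨g, hg⟩ := (LieAlgebra.ad k L y).exists_apply_eq_smul_of_finrank_range_eq_one hrk
    (mem_range_self _ x) hv0
  replace hg : ∀ z, ⁅y, z⁆ = g z • ⁅y, x⁆ := hg
  have hg_ne_one : ∀ n, n ≠ 1 → ∀ z ∈ m n, g z = 0 := fun n hn z hz =>
    eq_zero_of_lie_eq_smul_of_graded hsum.submodule_iSupIndep hbr hy
      (by simpa using hbr 1 1 y hy x hx) hv0 hg (by omega) hz
  have hgx : g x = 1 := smul_left_injective k hv0 ((hg x).symm.trans (one_smul k _).symm)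
  have hy0 : y ≠ 0 := by rintro rfl; simp at hxy
  refine ⟨g.smulRight y, LieAlgebra.smulRight_lie_of_lie_eq_smul hg
    (lie_apply_eq_zero_of_graded hsum.submodule_iSup_eq_top h0 hbr
      fun n hn => hg_ne_one n (by omega)), fun i z hz => ?_,
    fun i hi z hz => by simp [hg_ne_one i (by omega) z hz], ?_, by simp [hgx], fun w _ hw => ?_⟩
  · rcases eq_or_ne i 1 with rfl | hi
    · exact Submodule.smul_mem _ _ hy
    · simp [hg_ne_one i hi z hz]
  · rw [range_smulRight_apply (fun h => by simp [h] at hgx), finrank_span_singleton hy0]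
  · have : g w • ⁅y, x⁆ = 0 := by rw [← hg, hw]
    simp [(smul_eq_zero.1 this).resolve_right hv0]

/-- if `y ∈ 𝔪_{-1}` has `rank (ad y) = 1` in a non-degenerate
GNLA, then the linear map `d` with `d x = y`, `d(W) = 0`
(`W = ker (ad y) ∩ 𝔪_{-1}`) and `d(𝔪_{-i}) = 0` for `i ≥ 2` is a
degree-preserving derivation of rank 1 vanishing on all `𝔪_{-i}`, `i ≥ 2`. -/
theorem stmt2 {k L : Type*} [Field k] [CharZero k] [LieRing L] [LieAlgebra k L]
    (m : ℕ → Submodule k L)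
    (hsum : DirectSum.IsInternal fun i => m i)
    (h0 : m 0 = ⊥)
    (μ : ℕ) (hdepth : ∀ i, μ < i → m i = ⊥)
    (hbr : ∀ i j, ∀ x ∈ m i, ∀ y ∈ m j, ⁅x, y⁆ ∈ m (i + j))
    (hgen : ∀ i, 1 ≤ i →
      m (i + 1) = Submodule.span k {z | ∃ u ∈ m 1, ∃ v ∈ m i, ⁅u, v⁆ = z})
    (hnd : ∀ y ∈ m 1, (∀ z : L, ⁅y, z⁆ = 0) → y = 0)
    (y : L) (hy : y ∈ m 1)
    (hrk : finrank k (LinearMap.range (LieAlgebra.ad k L y)) = 1)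
    (x : L) (hx : x ∈ m 1) (hxy : ⁅x, y⁆ ≠ 0) :
    ∃ d : L →ₗ[k] L,
      (∀ a b : L, d ⁅a, b⁆ = ⁅d a, b⁆ + ⁅a, d b⁆) ∧
      (∀ i, ∀ z ∈ m i, d z ∈ m i) ∧
      (∀ i, 2 ≤ i → ∀ z ∈ m i, d z = 0) ∧
      finrank k (LinearMap.range d) = 1 ∧
      d x = y ∧
      (∀ w ∈ m 1, ⁅y, w⁆ = 0 → d w = 0) :=
  stmt2_general m hsum h0 hbr y hy hrk x hx hxy
end

section
/- Let 𝔪 be a non-degenerate graded nilpotent Lie algebra over a field of characteristic 0, and suppose y ∈ 𝔪_{-1} satisfies rank(ad y) = 1. Let W = ker(ad y) and choose x ∈ 𝔪_{-1} with [x,y] ≠ 0. Define y₁ = y and y_{i+1} = [x, y_i]. Let μ be the largest integer with y_μ ≠ 0. Then V = span(y₁, …, y_μ) is a commutative ideal of 𝔪 with [V, W] = 0 and [x, V] ⊆ V. -/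
/-!
Since `ad y` has rank one and `⁅y, x⁆ ≠ 0`, its range is the line through `⁅y, x⁆`, which lies
in degree `2`. Every `⁅y, ⁅x, z⁆⁆` has degree at least `3`, so `ad y ∘ ad x = 0`: all `yᵢ` lie in
`ker (ad y)`, and this kernel is `ad x`-stable. The Jacobi identity then propagates
`⁅y₁, ker (ad y)⁆ = 0` to every `yᵢ`, and `⁅𝔪, y₁⁆ ⊆ V` to `⁅𝔪, yᵢ⁆ ⊆ V`.
-/

open Module LinearMap

theorem LinearMap.range_eq_span_singleton_of_finrank_eq_one {k M N : Type*} [Field k]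
    [AddCommGroup M] [Module k M] [AddCommGroup N] [Module k N] (f : M →ₗ[k] N)
    (hf : finrank k (range f) = 1) {x : M} (hx : f x ≠ 0) : range f = k ∙ f x := by
  refine le_antisymm (fun w hw => ?_) ((Submodule.span_singleton_le_iff_mem _ _).mpr ⟨x, rfl⟩)
  obtain ⟨c, hc⟩ := (finrank_eq_one_iff_of_nonzero' (⟨f x, x, rfl⟩ : range f)
    (by simpa [Subtype.ext_iff] using hx)).mp hf ⟨w, hw⟩
  have hcw : c • f x = w := congrArg Subtype.val hc
  rw [← hcw]
  exact Submodule.smul_mem _ c (Submodule.mem_span_singleton_self _)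

theorem LieAlgebra.lie_mem_of_finrank_range_ad_eq_one {k L : Type*} [Field k] [LieRing L]
    [LieAlgebra k L] {x y : L} (hrk : finrank k (range (LieAlgebra.ad k L y)) = 1)
    (hyx : ⁅y, x⁆ ≠ 0) {p : Submodule k L} (hp : ⁅y, x⁆ ∈ p) (z : L) : ⁅y, z⁆ ∈ p := by
  have hrange := (LieAlgebra.ad k L y).range_eq_span_singleton_of_finrank_eq_one hrk hyx
  rw [LieAlgebra.ad_apply] at hrange
  exact (Submodule.span_singleton_le_iff_mem _ _).mpr hp (hrange ▸ mem_range_self _ z)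

theorem lie_eq_zero_comm {L : Type*} [LieRing L] {u v : L} : ⁅u, v⁆ = 0 ↔ ⁅v, u⁆ = 0 := by
  rw [← lie_skew, neg_eq_zero]

section Iterates

variable {k L : Type*} [CommRing k] [LieRing L] [LieAlgebra k L] {x y : L} {ys : ℕ → L}
  {μ' : ℕ}

theorem lie_iterate_eq_zero_of_lie_eq_zero (hys1 : ys 1 = y)
    (hrec : ∀ i, 1 ≤ i → ys (i + 1) = ⁅x, ys i⁆) (hyx : ∀ z : L, ⁅y, ⁅x, z⁆⁆ = 0) {w : L}
    (hw : ⁅y, w⁆ = 0) : ∀ i, 1 ≤ i → ⁅ys i, w⁆ = 0 := by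
  intro i hi
  induction i, hi using Nat.le_induction generalizing w with
  | base => rwa [hys1]
  | succ i hi ih => rw [hrec i hi, lie_lie, ih hw, ih (hyx w), lie_zero, sub_zero]

theorem lie_iterate_mem_of_range_le (hys1 : ys 1 = y)
    (hrec : ∀ i, 1 ≤ i → ys (i + 1) = ⁅x, ys i⁆) {V : Submodule k L} (hyV : ∀ z : L, ⁅y, z⁆ ∈ V)
    (hxV : ∀ v ∈ V, ⁅x, v⁆ ∈ V) : ∀ i, 1 ≤ i → ∀ z : L, ⁅z, ys i⁆ ∈ V := by
  intro i hi
  induction i, hi using Nat.le_induction with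
  | base => intro z; rw [hys1, ← lie_skew]; exact neg_mem (hyV z)
  | succ i hi ih =>
    intro z
    rw [hrec i hi, leibniz_lie]
    exact add_mem (ih _) (hxV _ (ih z))

theorem span_image_Icc_le {p : Submodule k L} (h : ∀ i, 1 ≤ i → ys i ∈ p) :
    Submodule.span k (ys '' Set.Icc 1 μ') ≤ p :=
  Submodule.span_le.mpr (by rintro _ ⟨i, hi, rfl⟩; exact h i hi.1)

theorem iterate_mem_span_Icc (hrec : ∀ i, 1 ≤ i → ys (i + 1) = ⁅x, ys i⁆)
    (hzero : ys (μ' + 1) = 0) : ∀ i, 1 ≤ i → ys i ∈ Submodule.span k (ys '' Set.Icc 1 μ') := by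
  intro i hi
  rcases le_or_gt i μ' with hle | hlt
  · exact Submodule.subset_span ⟨i, ⟨hi, hle⟩, rfl⟩
  · have : ys i = 0 := by
      induction i, hlt using Nat.le_induction with
      | base => exact hzero
      | succ i hi ih => rw [hrec i (by omega), ih (by omega), lie_zero]
    rw [this]
    exact zero_mem _

theorem lie_mem_span_Icc (hrec : ∀ i, 1 ≤ i → ys (i + 1) = ⁅x, ys i⁆)
    (hzero : ys (μ' + 1) = 0) :
    ∀ v ∈ Submodule.span k (ys '' Set.Icc 1 μ'), ⁅x, v⁆ ∈ Submodule.span k (ys '' Set.Icc 1 μ') :=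
  span_image_Icc_le (p := (Submodule.span k _).comap (LieAlgebra.ad k L x)) fun i hi => by
    simpa [← hrec i hi] using iterate_mem_span_Icc hrec hzero (i + 1) (by omega)

theorem lie_iterate_self_eq_zero (hys1 : ys 1 = y) (hrec : ∀ i, 1 ≤ i → ys (i + 1) = ⁅x, ys i⁆)
    (hyx : ∀ z : L, ⁅y, ⁅x, z⁆⁆ = 0) : ∀ i, 1 ≤ i → ⁅y, ys i⁆ = 0 := by
  intro i hi
  obtain rfl | hi := hi.eq_or_lt
  · rw [hys1, lie_self]
  · obtain ⟨j, rfl⟩ := Nat.exists_eq_add_one_of_ne_zero (by omega : i ≠ 0)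
    rw [hrec j (by omega)]
    exact hyx _

end Iterates

section Graded

variable {k L : Type*} [CommRing k] [LieRing L] [LieAlgebra k L] {m : ℕ → Submodule k L}

theorem DirectSum.IsInternal.eq_zero_of_mem_of_mem (hsum : DirectSum.IsInternal fun i => m i)
    {i j : ℕ} (hij : i ≠ j) {v : L} (hi : v ∈ m i) (hj : v ∈ m j) : v = 0 :=
  Submodule.disjoint_def.mp (hsum.submodule_iSupIndep.pairwiseDisjoint hij) v hi hj

theorem lie_lie_eq_zero_of_range_le (hsum : DirectSum.IsInternal fun i => m i) (h0 : m 0 = ⊥)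
    (hbr : ∀ i j, ∀ x ∈ m i, ∀ y ∈ m j, ⁅x, y⁆ ∈ m (i + j)) {x y : L} (hx : x ∈ m 1)
    (hy : y ∈ m 1) (hrange : ∀ z : L, ⁅y, z⁆ ∈ m 2) (z : L) : ⁅y, ⁅x, z⁆⁆ = 0 := by
  suffices ⨆ d, m d ≤ ker (LieAlgebra.ad k L y ∘ₗ LieAlgebra.ad k L x) by
    rw [hsum.submodule_iSup_eq_top] at this
    simpa using this (Submodule.mem_top (x := z))
  refine iSup_le fun d w hw => ?_
  rcases Nat.eq_zero_or_pos d with rfl | hd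
  · rw [h0, Submodule.mem_bot] at hw
    simp [hw]
  · exact hsum.eq_zero_of_mem_of_mem (by omega) (hbr _ _ _ hy _ (hbr _ _ _ hx _ hw)) (hrange _)

end Graded

theorem stmt3_general {k L : Type*} [Field k] [LieRing L] [LieAlgebra k L]
    (m : ℕ → Submodule k L)
    (hsum : DirectSum.IsInternal fun i => m i)
    (h0 : m 0 = ⊥)
    (hbr : ∀ i j, ∀ x ∈ m i, ∀ y ∈ m j, ⁅x, y⁆ ∈ m (i + j))
    (y : L) (hy : y ∈ m 1)
    (hrk : finrank k (LinearMap.range (LieAlgebra.ad k L y)) = 1)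
    (x : L) (hx : x ∈ m 1) (hxy : ⁅x, y⁆ ≠ 0)
    (ys : ℕ → L) (hys1 : ys 1 = y)
    (hrec : ∀ i, 1 ≤ i → ys (i + 1) = ⁅x, ys i⁆)
    (μ' : ℕ) (hzero : ys (μ' + 1) = 0) :
    ∀ V : Submodule k L, V = Submodule.span k (ys '' Set.Icc 1 μ') →
      (∀ u ∈ V, ∀ v ∈ V, ⁅u, v⁆ = 0) ∧
      (∀ z : L, ∀ v ∈ V, ⁅z, v⁆ ∈ V) ∧
      (∀ v ∈ V, ∀ w : L, ⁅y, w⁆ = 0 → ⁅v, w⁆ = 0) ∧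
      (∀ v ∈ V, ⁅x, v⁆ ∈ V) := by
  rintro V rfl
  set V := Submodule.span k (ys '' Set.Icc 1 μ')
  have hxV : ∀ v ∈ V, ⁅x, v⁆ ∈ V := lie_mem_span_Icc hrec hzero
  have hyx : ⁅y, x⁆ ≠ 0 := lie_eq_zero_comm.not.mp hxy
  have hyV : ∀ z : L, ⁅y, z⁆ ∈ V := by
    refine LieAlgebra.lie_mem_of_finrank_range_ad_eq_one hrk hyx ?_
    rw [← lie_skew, ← hys1, ← hrec 1 le_rfl]
    exact neg_mem (iterate_mem_span_Icc hrec hzero 2 (by omega))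
  have hyxz : ∀ z : L, ⁅y, ⁅x, z⁆⁆ = 0 := lie_lie_eq_zero_of_range_le hsum h0 hbr hx hy <|
    LieAlgebra.lie_mem_of_finrank_range_ad_eq_one hrk hyx (hbr 1 1 y hy x hx)
  have hVW : ∀ v ∈ V, ∀ w : L, ⁅y, w⁆ = 0 → ⁅v, w⁆ = 0 := fun v hv w hw =>
    lie_eq_zero_comm.mp <| span_image_Icc_le (p := ker (LieAlgebra.ad k L w)) (fun i hi =>
      lie_eq_zero_comm.mp <| lie_iterate_eq_zero_of_lie_eq_zero hys1 hrec hyxz hw i hi) hv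
  have hV_ker : V ≤ ker (LieAlgebra.ad k L y) :=
    span_image_Icc_le (lie_iterate_self_eq_zero hys1 hrec hyxz)
  exact ⟨fun u hu v hv => hVW u hu v (hV_ker hv),
    fun z v hv => span_image_Icc_le (p := V.comap (LieAlgebra.ad k L z))
      (fun i hi => lie_iterate_mem_of_range_le hys1 hrec hyV hxV i hi z) hv,
    hVW, hxV⟩

/-- for `y ∈ 𝔪_{-1}` with `rank (ad y) = 1`, `W = ker (ad y)`,
`x ∈ 𝔪_{-1}` with `⁅x,y⁆ ≠ 0`, and `y₁ = y`, `y_{i+1} = ⁅x, y_i⁆`, with `μ'`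
the largest index with `y_{μ'} ≠ 0`, the span `V` of `y₁, …, y_{μ'}` is a
commutative ideal of `𝔪` with `⁅V, W⁆ = 0` and `⁅x, V⁆ ⊆ V`. -/
theorem stmt3 {k L : Type*} [Field k] [CharZero k] [LieRing L] [LieAlgebra k L]
    (m : ℕ → Submodule k L)
    (hsum : DirectSum.IsInternal fun i => m i)
    (h0 : m 0 = ⊥)
    (μ : ℕ) (hdepth : ∀ i, μ < i → m i = ⊥)
    (hbr : ∀ i j, ∀ x ∈ m i, ∀ y ∈ m j, ⁅x, y⁆ ∈ m (i + j))
    (hgen : ∀ i, 1 ≤ i →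
      m (i + 1) = Submodule.span k {z | ∃ u ∈ m 1, ∃ v ∈ m i, ⁅u, v⁆ = z})
    (hnd : ∀ y ∈ m 1, (∀ z : L, ⁅y, z⁆ = 0) → y = 0)
    (y : L) (hy : y ∈ m 1)
    (hrk : finrank k (LinearMap.range (LieAlgebra.ad k L y)) = 1)
    (x : L) (hx : x ∈ m 1) (hxy : ⁅x, y⁆ ≠ 0)
    (ys : ℕ → L) (hys1 : ys 1 = y)
    (hrec : ∀ i, 1 ≤ i → ys (i + 1) = ⁅x, ys i⁆)
    (μ' : ℕ) (hμ'1 : 1 ≤ μ') (hne : ys μ' ≠ 0) (hzero : ys (μ' + 1) = 0) :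
    ∀ V : Submodule k L, V = Submodule.span k (ys '' Set.Icc 1 μ') →
      (∀ u ∈ V, ∀ v ∈ V, ⁅u, v⁆ = 0) ∧
      (∀ z : L, ∀ v ∈ V, ⁅z, v⁆ ∈ V) ∧
      (∀ v ∈ V, ∀ w : L, ⁅y, w⁆ = 0 → ⁅v, w⁆ = 0) ∧
      (∀ v ∈ V, ⁅x, v⁆ ∈ V) :=
  stmt3_general m hsum h0 hbr y hy hrk x hx hxy ys hys1 hrec μ' hzero
end

section
/- Let 𝔪 be a non-degenerate graded nilpotent Lie algebra and y ∈ 𝔪_{-1} with rank(ad y) = 1. Then [y, 𝔪_{-i}] = 0 for all i ≥ 2, i.e., the image of ad y is contained in 𝔪_{-2} and ad y vanishes on ⊕_{i≥2} 𝔪_{-i}. -/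
open Module LinearMap

/-!
If `ad y` killed `𝔪_{-1}`, then, since `𝔪` is generated by `𝔪_{-1}`, the Leibniz rule would make
`ad y` kill every `𝔪_{-i}`, hence all of `𝔪`, contradicting `rank (ad y) = 1`. So the image of
`ad y` contains a nonzero vector `⁅y, u⁆ ∈ 𝔪_{-2}`, which spans it. For `z ∈ 𝔪_{-i}`, `i ≥ 2`, the
bracket `⁅y, z⁆` then lies in `𝔪_{-2} ∩ 𝔪_{-1-i} = 0`.
-/

theorem Submodule.le_of_finrank_eq_one_of_mem {K V : Type*} [DivisionRing K] [AddCommGroup V]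
    [Module K V] {S P : Submodule K V} (hS : finrank K S = 1) {w : V} (hwS : w ∈ S)
    (hw0 : w ≠ 0) (hwP : w ∈ P) : S ≤ P := by
  intro x hx
  have hw0' : (⟨w, hwS⟩ : S) ≠ 0 := by simpa using hw0
  obtain ⟨c, hc⟩ := (finrank_eq_one_iff_of_nonzero' _ hw0').mp hS ⟨x, hx⟩
  have hcx : c • w = x := congrArg Subtype.val hc
  rw [← hcx]
  exact P.smul_mem c hwP

section GeneratedInDegreeOne

variable {k L : Type*} [CommRing k] [LieRing L] [LieAlgebra k L] (m : ℕ → Submodule k L)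

theorem le_ker_ad_of_le_ker_ad_one
    (hgen : ∀ i, 1 ≤ i →
      m (i + 1) = Submodule.span k {z | ∃ u ∈ m 1, ∃ v ∈ m i, ⁅u, v⁆ = z})
    {x : L} (hx : m 1 ≤ ker (LieAlgebra.ad k L x)) (i : ℕ) :
    m (i + 1) ≤ ker (LieAlgebra.ad k L x) := by
  induction i with
  | zero => exact hx
  | succ i ih =>
    rw [hgen (i + 1) (by omega), Submodule.span_le]
    rintro _ ⟨u, hu, v, hv, rfl⟩
    have hxu : ⁅x, u⁆ = 0 := hx hu
    have hxv : ⁅x, v⁆ = 0 := ih hv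
    simp [leibniz_lie, hxu, hxv]

theorem ad_eq_zero_of_le_ker_ad_one
    (hsum : DirectSum.IsInternal fun i => m i) (h0 : m 0 = ⊥)
    (hgen : ∀ i, 1 ≤ i →
      m (i + 1) = Submodule.span k {z | ∃ u ∈ m 1, ∃ v ∈ m i, ⁅u, v⁆ = z})
    {x : L} (hx : m 1 ≤ ker (LieAlgebra.ad k L x)) : LieAlgebra.ad k L x = 0 := by
  rw [← ker_eq_top, eq_top_iff, ← hsum.submodule_iSup_eq_top, iSup_le_iff]
  rintro (_ | i)
  · simp [h0]
  · exact le_ker_ad_of_le_ker_ad_one m hgen hx i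

end GeneratedInDegreeOne

theorem stmt4_general {k L : Type*} [Field k] [LieRing L] [LieAlgebra k L]
    (m : ℕ → Submodule k L)
    (hsum : DirectSum.IsInternal fun i => m i)
    (h0 : m 0 = ⊥)
    (hbr : ∀ i j, ∀ x ∈ m i, ∀ y ∈ m j, ⁅x, y⁆ ∈ m (i + j))
    (hgen : ∀ i, 1 ≤ i →
      m (i + 1) = Submodule.span k {z | ∃ u ∈ m 1, ∃ v ∈ m i, ⁅u, v⁆ = z})
    (y : L) (hy : y ∈ m 1)
    (hrk : finrank k (LinearMap.range (LieAlgebra.ad k L y)) = 1) :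
    (∀ i, 2 ≤ i → ∀ z ∈ m i, ⁅y, z⁆ = 0) ∧
    LinearMap.range (LieAlgebra.ad k L y) ≤ m 2 := by
  obtain ⟨u, hu, hyu⟩ : ∃ u ∈ m 1, ⁅y, u⁆ ≠ 0 := by
    by_contra! h
    have had : LieAlgebra.ad k L y = 0 := ad_eq_zero_of_le_ker_ad_one m hsum h0 hgen h
    rw [had, range_zero, finrank_bot] at hrk
    exact zero_ne_one hrk
  have hrange : LinearMap.range (LieAlgebra.ad k L y) ≤ m 2 :=
    Submodule.le_of_finrank_eq_one_of_mem hrk (mem_range_self _ u) hyu (hbr 1 1 y hy u hu)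
  refine ⟨fun i hi z hz => ?_, hrange⟩
  have hdisj : Disjoint (m 2) (m (1 + i)) :=
    hsum.submodule_iSupIndep.pairwiseDisjoint (by omega : 2 ≠ 1 + i)
  exact Submodule.disjoint_def.mp hdisj _ (hrange (mem_range_self _ z)) (hbr 1 i y hy z hz)

/-- if `y ∈ 𝔪_{-1}` has `rank (ad y) = 1` in a non-degenerate
GNLA, then `⁅y, 𝔪_{-i}⁆ = 0` for all `i ≥ 2`, and the image of `ad y` is
contained in `𝔪_{-2}`. -/
theorem stmt4 {k L : Type*} [Field k] [CharZero k] [LieRing L] [LieAlgebra k L]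
    (m : ℕ → Submodule k L)
    (hsum : DirectSum.IsInternal fun i => m i)
    (h0 : m 0 = ⊥)
    (μ : ℕ) (hdepth : ∀ i, μ < i → m i = ⊥)
    (hbr : ∀ i j, ∀ x ∈ m i, ∀ y ∈ m j, ⁅x, y⁆ ∈ m (i + j))
    (hgen : ∀ i, 1 ≤ i →
      m (i + 1) = Submodule.span k {z | ∃ u ∈ m 1, ∃ v ∈ m i, ⁅u, v⁆ = z})
    (hnd : ∀ y ∈ m 1, (∀ z : L, ⁅y, z⁆ = 0) → y = 0)
    (y : L) (hy : y ∈ m 1)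
    (hrk : finrank k (LinearMap.range (LieAlgebra.ad k L y)) = 1) :
    (∀ i, 2 ≤ i → ∀ z ∈ m i, ⁅y, z⁆ = 0) ∧
    LinearMap.range (LieAlgebra.ad k L y) ≤ m 2 :=
  stmt4_general m hsum h0 hbr hgen y hy hrk
end

section
/- Let 𝔪 be a non-degenerate graded nilpotent Lie algebra, d a degree-preserving derivation with d(𝔪_{-i}) = 0 for i ≥ 2 and rank d = 1, and let y = d(x) span the image of d for some x ∈ 𝔪_{-1}. Then [y, ker d ∩ 𝔪_{-1}] = 0 and [x, y] ≠ 0. -/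
open Module LinearMap

/-!
Since `d ⁅x, w⁆` vanishes in degree 2, the Leibniz rule gives `⁅d x, w⁆ = 0` for `w ∈ ker d ∩ 𝔪₋₁`.
As `d` has rank one, every `z ∈ 𝔪₋₁` is `c • x` modulo `ker d ∩ 𝔪₋₁`; so if also `⁅x, y⁆ = 0`, then
`ad y` kills `𝔪₋₁`. Being a derivation, `ad y` then kills the algebra generated by `𝔪₋₁`, which is
all of `𝔪`, so `y ∈ 𝔪₋₁` is central, contradicting non-degeneracy.
-/

section

variable {k L : Type*} [Field k] [LieRing L] [LieAlgebra k L]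

theorem LinearMap.exists_smul_eq_of_finrank_range_eq_one {V W : Type*} [AddCommGroup V]
    [Module k V] [AddCommGroup W] [Module k W] {f : V →ₗ[k] W}
    (hrk : finrank k (range f) = 1) {x : V} (hx : f x ≠ 0) (z : V) : ∃ c : k, f z = c • f x := by
  have hx' : (⟨f x, mem_range_self f x⟩ : range f) ≠ 0 := by simpa using hx
  obtain ⟨c, hc⟩ := (finrank_eq_one_iff_of_nonzero' _ hx').mp hrk ⟨f z, mem_range_self f z⟩
  exact ⟨c, congrArg Subtype.val hc.symm⟩

theorem lie_apply_eq_zero_of_finrank_range_eq_one {d : L →ₗ[k] L}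
    (hrk : finrank k (range d) = 1) {V : Submodule k L} {x : L} (hx : x ∈ V) (hdx : d x ≠ 0)
    (hker : ∀ w ∈ V, d w = 0 → ⁅d x, w⁆ = 0) (hxdx : ⁅x, d x⁆ = 0) :
    ∀ z ∈ V, ⁅d x, z⁆ = 0 := by
  intro z hz
  obtain ⟨c, hc⟩ := exists_smul_eq_of_finrank_range_eq_one hrk hdx z
  have hres : ⁅d x, z - c • x⁆ = 0 :=
    hker _ (sub_mem hz (V.smul_mem c hx)) (by rw [map_sub, map_smul, hc, sub_self])
  rwa [lie_sub, lie_smul, ← lie_skew (d x) x, hxdx, neg_zero, smul_zero, sub_zero] at hres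

variable (m : ℕ → Submodule k L)
  (hgen : ∀ i, 1 ≤ i → m (i + 1) = Submodule.span k {z | ∃ u ∈ m 1, ∃ v ∈ m i, ⁅u, v⁆ = z})
  {D : L →ₗ[k] L} (hD : ∀ a b : L, D ⁅a, b⁆ = ⁅D a, b⁆ + ⁅a, D b⁆)
include hgen hD

theorem derivation_apply_eq_zero_of_forall_mem_one (h1 : ∀ z ∈ m 1, D z = 0) :
    ∀ i, 1 ≤ i → ∀ z ∈ m i, D z = 0 := by
  intro i hi
  induction i, hi using Nat.le_induction with
  | base => exact h1
  | succ n hn ih =>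
    intro z hz
    rw [hgen n hn] at hz
    induction hz using Submodule.span_induction with
    | mem w hw =>
      obtain ⟨u, hu, v, hv, rfl⟩ := hw
      rw [hD, h1 u hu, ih v hv, zero_lie, lie_zero, add_zero]
    | zero => exact map_zero D
    | add a b _ _ ha hb => rw [map_add, ha, hb, add_zero]
    | smul c a _ ha => rw [map_smul, ha, smul_zero]

theorem derivation_eq_zero_of_forall_mem_one (htop : ⨆ i, m i = ⊤) (h0 : m 0 = ⊥)
    (h1 : ∀ z ∈ m 1, D z = 0) : D = 0 := by
  suffices h : ⨆ i, m i ≤ ker D by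
    rw [htop, top_le_iff, ker_eq_top] at h
    exact h
  refine iSup_le fun i z hz => ?_
  rcases Nat.eq_zero_or_pos i with rfl | hi
  · rw [h0, Submodule.mem_bot] at hz
    simp [hz]
  · exact derivation_apply_eq_zero_of_forall_mem_one m hgen hD h1 i hi z hz

end

theorem stmt5_general {k L : Type*} [Field k] [LieRing L] [LieAlgebra k L]
    (m : ℕ → Submodule k L)
    (hsum : DirectSum.IsInternal fun i => m i)
    (h0 : m 0 = ⊥)
    (hbr : ∀ i j, ∀ x ∈ m i, ∀ y ∈ m j, ⁅x, y⁆ ∈ m (i + j))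
    (hgen : ∀ i, 1 ≤ i →
      m (i + 1) = Submodule.span k {z | ∃ u ∈ m 1, ∃ v ∈ m i, ⁅u, v⁆ = z})
    (hnd : ∀ y ∈ m 1, (∀ z : L, ⁅y, z⁆ = 0) → y = 0)
    (d : L →ₗ[k] L)
    (hder : ∀ a b : L, d ⁅a, b⁆ = ⁅d a, b⁆ + ⁅a, d b⁆)
    (hpres : ∀ i, ∀ z ∈ m i, d z ∈ m i)
    (hvan : ∀ i, 2 ≤ i → ∀ z ∈ m i, d z = 0)
    (hrk : finrank k (LinearMap.range d) = 1)
    (x y : L) (hx : x ∈ m 1) (hdx : d x = y) (hy : y ≠ 0) :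
    (∀ w ∈ m 1, d w = 0 → ⁅y, w⁆ = 0) ∧ ⁅x, y⁆ ≠ 0 := by
  subst hdx
  have hker : ∀ w ∈ m 1, d w = 0 → ⁅d x, w⁆ = 0 := fun w hw hdw => by
    have h := hder x w
    rwa [hvan 2 le_rfl _ (hbr 1 1 x hx w hw), hdw, lie_zero, add_zero, eq_comm] at h
  refine ⟨hker, fun hxy => hy (hnd _ (hpres 1 x hx) fun z => ?_)⟩
  have had : LieAlgebra.ad k L (d x) = 0 :=
    derivation_eq_zero_of_forall_mem_one m hgen (fun a b => leibniz_lie (d x) a b)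
      hsum.submodule_iSup_eq_top h0
      (lie_apply_eq_zero_of_finrank_range_eq_one hrk hx hy hker hxy)
  simpa using LinearMap.congr_fun had z

/-- if `d` is a degree-preserving rank-1 derivation of a
non-degenerate GNLA vanishing on `𝔪_{-i}`, `i ≥ 2`, and `y = d x ≠ 0` spans
the image of `d` for some `x ∈ 𝔪_{-1}`, then `⁅y, ker d ∩ 𝔪_{-1}⁆ = 0` and
`⁅x, y⁆ ≠ 0`. -/
theorem stmt5 {k L : Type*} [Field k] [CharZero k] [LieRing L] [LieAlgebra k L]
    (m : ℕ → Submodule k L)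
    (hsum : DirectSum.IsInternal fun i => m i)
    (h0 : m 0 = ⊥)
    (μ : ℕ) (hdepth : ∀ i, μ < i → m i = ⊥)
    (hbr : ∀ i j, ∀ x ∈ m i, ∀ y ∈ m j, ⁅x, y⁆ ∈ m (i + j))
    (hgen : ∀ i, 1 ≤ i →
      m (i + 1) = Submodule.span k {z | ∃ u ∈ m 1, ∃ v ∈ m i, ⁅u, v⁆ = z})
    (hnd : ∀ y ∈ m 1, (∀ z : L, ⁅y, z⁆ = 0) → y = 0)
    (d : L →ₗ[k] L)
    (hder : ∀ a b : L, d ⁅a, b⁆ = ⁅d a, b⁆ + ⁅a, d b⁆)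
    (hpres : ∀ i, ∀ z ∈ m i, d z ∈ m i)
    (hvan : ∀ i, 2 ≤ i → ∀ z ∈ m i, d z = 0)
    (hrk : finrank k (LinearMap.range d) = 1)
    (x y : L) (hx : x ∈ m 1) (hdx : d x = y) (hy : y ≠ 0) :
    (∀ w ∈ m 1, d w = 0 → ⁅y, w⁆ = 0) ∧ ⁅x, y⁆ ≠ 0 :=
  stmt5_general m hsum h0 hbr hgen hnd d hder hpres hvan hrk x y hx hdx hy
end

section
/- Let 𝔫 be a graded nilpotent Lie algebra generated by 𝔫_{-1}, let V = ⊕_{i=1}^{s} V_{-i} be a graded 𝔫-module on which [𝔫,𝔫] and a codimension-1 subspace W ⊆ 𝔫_{-1} act trivially, with dim V_{-i} = 1 for all i and V_{-i-1} = 𝔫_{-1}·V_{-i}, where s ≥ 2. Let 𝔪 be any Lie algebra extension 0 → V → 𝔪 → 𝔫 → 0 with V a commutative ideal. Then any non-zero y ∈ V_{-1} satisfies rank(ad_𝔪 y) = 1. -/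
open Module LinearMap

/-
The image of `ad y` lies in `V 2`, which is a line, so the rank is at most one. It is not zero:
`V 1` is the line through `y`, so `V 2` is spanned by the brackets `⁅z, c • y⁆`, and if
`ad y` vanished these would all be zero, contradicting `dim V 2 = 1`.
-/

theorem Submodule.eq_of_le_of_ne_bot_of_finrank_eq_one {k E : Type*} [Field k] [AddCommGroup E]
    [Module k E] {p q : Submodule k E} (hpq : p ≤ q) (hp : p ≠ ⊥) (hq : finrank k q = 1) :
    p = q := by
  have : FiniteDimensional k q := Module.finite_of_finrank_eq_succ hq
  have : FiniteDimensional k p := Submodule.finiteDimensional_of_le hpq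
  have hpos : finrank k p ≠ 0 := fun h => hp (Submodule.finrank_eq_zero.mp h)
  exact Submodule.eq_of_le_of_finrank_le hpq (by omega)

section

variable {k M : Type*} [Field k] [LieRing M] [LieAlgebra k M]

theorem LieAlgebra.range_ad_le {y : M} {W : Submodule k M} (h : ∀ z : M, ⁅z, y⁆ ∈ W) :
    range (LieAlgebra.ad k M y) ≤ W := by
  rintro _ ⟨z, rfl⟩
  rw [LieAlgebra.ad_apply, ← lie_skew]
  exact W.neg_mem (h z)

theorem LieAlgebra.span_lie_span_singleton_eq_bot {y : M} (h : LieAlgebra.ad k M y = 0) :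
    Submodule.span k {w | ∃ z : M, ∃ v ∈ Submodule.span k {y}, ⁅z, v⁆ = w} = ⊥ := by
  rw [Submodule.span_eq_bot]
  rintro _ ⟨z, v, hv, rfl⟩
  obtain ⟨c, rfl⟩ := Submodule.mem_span_singleton.mp hv
  have hyz : ⁅y, z⁆ = 0 := LinearMap.congr_fun h z
  rw [lie_smul, ← lie_skew, hyz, neg_zero, smul_zero]

end

theorem stmt6_general {k M : Type*} [Field k] [LieRing M] [LieAlgebra k M]
    (V : ℕ → Submodule k M) (s : ℕ) (hs : 2 ≤ s)
    (hdim : ∀ i, 1 ≤ i → i ≤ s → finrank k (V i) = 1)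
    (hideal : ∀ z : M, ∀ i, ∀ v ∈ V i, ⁅z, v⁆ ∈ V (i + 1))
    (hgen : ∀ i, 1 ≤ i → i < s →
      V (i + 1) = Submodule.span k {w | ∃ z : M, ∃ v ∈ V i, ⁅z, v⁆ = w}) :
    ∀ y ∈ V 1, y ≠ 0 →
      finrank k (LinearMap.range (LieAlgebra.ad k M y)) = 1 := by
  intro y hy hy0
  have hdim2 : finrank k (V 2) = 1 := hdim 2 one_le_two hs
  have hV1 : Submodule.span k {y} = V 1 :=
    Submodule.eq_of_le_of_ne_bot_of_finrank_eq_one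
      ((Submodule.span_singleton_le_iff_mem y _).mpr hy) (by simpa using hy0)
      (hdim 1 le_rfl (by omega))
  have had : LieAlgebra.ad k M y ≠ 0 := by
    intro h
    have hV2 : V 2 = ⊥ := by
      rw [hgen 1 le_rfl (by omega), ← hV1, LieAlgebra.span_lie_span_singleton_eq_bot h]
    rw [hV2, finrank_bot] at hdim2
    exact zero_ne_one hdim2
  have hrange : range (LieAlgebra.ad k M y) = V 2 :=
    Submodule.eq_of_le_of_ne_bot_of_finrank_eq_one
      (LieAlgebra.range_ad_le fun z => hideal z 1 y hy) (by rwa [Ne, range_eq_bot]) hdim2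
  rw [hrange, hdim2]

/-- if `𝔪` is a special extension of a GNLA `𝔫` by a graded
commutative ideal `V = ⊕_{i=1}^{s} V_{-i}` with `dim V_{-i} = 1`,
`V_{-i-1} = 𝔫_{-1}·V_{-i}`, `s ≥ 2`, on which `[𝔫,𝔫]` (and a codimension-one
subspace `W ⊆ 𝔫_{-1}`) acts trivially, then any non-zero `y ∈ V_{-1}` has
`rank (ad_𝔪 y) = 1`. (The pieces `V i` sit inside `𝔪`; `⁅z, V i⁆ ⊆ V (i+1)`
encodes that the ideal `V` is graded with only the degree `-1` part of `𝔫`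
acting non-trivially.) -/
theorem stmt6 {k M : Type*} [Field k] [CharZero k] [LieRing M] [LieAlgebra k M]
    (V : ℕ → Submodule k M) (s : ℕ) (hs : 2 ≤ s)
    (hV0 : V 0 = ⊥) (hVtop : ∀ i, s < i → V i = ⊥)
    (hdim : ∀ i, 1 ≤ i → i ≤ s → finrank k (V i) = 1)
    (habelian : ∀ i j, ∀ u ∈ V i, ∀ v ∈ V j, ⁅u, v⁆ = 0)
    (hideal : ∀ z : M, ∀ i, ∀ v ∈ V i, ⁅z, v⁆ ∈ V (i + 1))
    (hcomm : ∀ a b : M, ∀ i, ∀ v ∈ V i, ⁅⁅a, b⁆, v⁆ = 0)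
    (hgen : ∀ i, 1 ≤ i → i < s →
      V (i + 1) = Submodule.span k {w | ∃ z : M, ∃ v ∈ V i, ⁅z, v⁆ = w}) :
    ∀ y ∈ V 1, y ≠ 0 →
      finrank k (LinearMap.range (LieAlgebra.ad k M y)) = 1 :=
  stmt6_general V s hs hdim hideal hgen
end

section
/- Let 𝔪 = 𝔪_{-1} ⊕ 𝔪_{-2} be a 2-step complex graded nilpotent Lie algebra (i.e., [𝔪_{-1},𝔪_{-1}] = 𝔪_{-2}, [𝔪_{-1},𝔪_{-2}] = 0) with dim 𝔪_{-2} = 2, which is non-degenerate (𝔪_{-1} ∩ Z(𝔪) = 0). Then there exists a non-zero y ∈ 𝔪_{-1} such that the adjoint map ad y : 𝔪 → 𝔪 has rank 1. -/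
/-!
In coordinates `𝔪₋₂ ≅ ℂ²` the bracket `𝔪₋₁ × 𝔪₋₁ → 𝔪₋₂` is a pair of bilinear forms, i.e. two
maps `A B : 𝔪₋₁ → 𝔪₋₁^*` between spaces of the same dimension. Some member `a A + b B` of the pencil
is singular: either `A` has a kernel, or `A` is invertible and `A⁻¹ B` has an eigenvector. For a
non-zero `y` in the kernel of `a A + b B`, the image `[y, 𝔪] = [y, 𝔪₋₁]` lies in the line of `𝔪₋₂`
cut out by `a x₀ + b x₁`, and it is non-zero by non-degeneracy.
-/

open Module LinearMap

namespace LinearMap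

variable {K V U W : Type*} [Field K] [IsAlgClosed K]
  [AddCommGroup V] [Module K V] [FiniteDimensional K V] [Nontrivial V]
  [AddCommGroup U] [Module K U] [FiniteDimensional K U]
  [AddCommGroup W] [Module K W] [FiniteDimensional K W]

theorem exists_ne_zero_smul_add_smul_apply_eq_zero (hUV : finrank K U ≤ finrank K V)
    (A B : V →ₗ[K] U) : ∃ y : V, y ≠ 0 ∧ ∃ a b : K, (a, b) ≠ 0 ∧ a • A y + b • B y = 0 := by
  by_cases hA : Function.Injective A
  · let E := A.linearEquivOfInjective hA (le_antisymm (A.finrank_le_finrank_of_injective hA) hUV)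
    obtain ⟨c, hc⟩ := Module.End.exists_eigenvalue (E.symm.toLinearMap ∘ₗ B)
    obtain ⟨y, hy⟩ := hc.exists_hasEigenvector
    have hBy : B y = c • A y := by
      simpa [E] using congrArg E hy.apply_eq_smul
    exact ⟨y, hy.2, c, -1, by simp, by simp [hBy]⟩
  · obtain ⟨y, hy, hy0⟩ := Submodule.exists_mem_ne_zero_of_ne_bot (mt ker_eq_bot.mp hA)
    exact ⟨y, hy0, 1, 0, by simp, by simpa using hy⟩

theorem exists_ne_zero_finrank_range_apply_le_one (β : V →ₗ[K] U →ₗ[K] W)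
    (hUV : finrank K U ≤ finrank K V) (hW : finrank K W = 2) :
    ∃ y : V, y ≠ 0 ∧ finrank K (range (β y)) ≤ 1 := by
  let b := Module.finBasisOfFinrankEq K W hW
  obtain ⟨y, hy, a, c, hac, hyac⟩ := exists_ne_zero_smul_add_smul_apply_eq_zero
    (by rwa [Subspace.dual_finrank_eq]) (β.compr₂ (b.coord 0)) (β.compr₂ (b.coord 1))
  let φ : Module.Dual K W := a • b.coord 0 + c • b.coord 1
  have hφ : φ ≠ 0 := by
    intro h
    have h0 := congrArg (· (b 0)) h
    have h1 := congrArg (· (b 1)) h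
    simp [φ] at h0 h1
    simp [h0, h1] at hac
  have hrange : range (β y) ≤ ker φ := by
    rintro _ ⟨x, rfl⟩
    simpa [φ] using congrArg (· x) hyac
  have := Submodule.finrank_mono hrange
  have := φ.finrank_ker_add_one_of_ne_zero hφ
  exact ⟨y, hy, by omega⟩

end LinearMap

section GradedBracket

variable {K L : Type*} [CommRing K] [LieRing L] [LieAlgebra K L] {m1 m2 : Submodule K L}

def Submodule.restrictedBracket (hbr : ∀ u ∈ m1, ∀ v ∈ m1, ⁅u, v⁆ ∈ m2) :
    m1 →ₗ[K] m1 →ₗ[K] m2 :=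
  LinearMap.mk₂ K (fun u v => ⟨⁅(u : L), (v : L)⁆, hbr u u.2 v v.2⟩)
    (fun _ _ _ => Subtype.ext (add_lie _ _ _)) (fun _ _ _ => Subtype.ext (smul_lie _ _ _))
    (fun _ _ _ => Subtype.ext (lie_add _ _ _)) (fun _ _ _ => Subtype.ext (lie_smul _ _ _))

theorem ad_eq_subtype_comp_restrictedBracket_comp_projectionOnto
    (hbr : ∀ u ∈ m1, ∀ v ∈ m1, ⁅u, v⁆ ∈ m2) (hcompl : IsCompl m1 m2)
    (hcentral : ∀ v ∈ m2, ∀ z : L, ⁅v, z⁆ = 0) (y : m1) :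
    LieAlgebra.ad K L y =
      m2.subtype ∘ₗ m1.restrictedBracket hbr y ∘ₗ m1.projectionOnto m2 hcompl := by
  refine ext_on_codisjoint hcompl.codisjoint (fun z hz => ?_) (fun v hv => ?_)
  · simp [Submodule.restrictedBracket, Submodule.projectionOnto_apply_left hcompl ⟨z, hz⟩]
  · simp only [Submodule.projectionOnto_apply_of_mem_right hcompl hv, map_zero, comp_apply]
    rw [LieAlgebra.ad_apply, ← lie_skew, hcentral v hv, neg_zero]

end GradedBracket

section Finrank

variable {K L : Type*} [Field K] [LieRing L] [LieAlgebra K L] [FiniteDimensional K L]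
  {m1 m2 : Submodule K L}

theorem finrank_range_ad_le_finrank_range_restrictedBracket
    (hbr : ∀ u ∈ m1, ∀ v ∈ m1, ⁅u, v⁆ ∈ m2) (hcompl : IsCompl m1 m2)
    (hcentral : ∀ v ∈ m2, ∀ z : L, ⁅v, z⁆ = 0) (y : m1) :
    finrank K (range (LieAlgebra.ad K L y)) ≤ finrank K (range (m1.restrictedBracket hbr y)) := by
  rw [ad_eq_subtype_comp_restrictedBracket_comp_projectionOnto hbr hcompl hcentral]
  calc _ ≤ finrank K (range (m2.subtype ∘ₗ m1.restrictedBracket hbr y)) :=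
        Submodule.finrank_mono (range_comp_le_range _ _)
    _ ≤ _ := by
        rw [range_comp]
        exact Submodule.finrank_map_le _ _

end Finrank

/-- a non-degenerate 2-step complex graded nilpotent Lie algebra
`𝔪 = 𝔪₋₁ ⊕ 𝔪₋₂` with `dim 𝔪₋₂ = 2` has a non-zero `y ∈ 𝔪₋₁` with
`rank (ad y) = 1`. -/
theorem stmt8 {M : Type*} [LieRing M] [LieAlgebra ℂ M] [FiniteDimensional ℂ M]
    (m1 m2 : Submodule ℂ M)
    (hcompl : IsCompl m1 m2)
    (hbr : m2 = Submodule.span ℂ {z | ∃ u ∈ m1, ∃ v ∈ m1, ⁅u, v⁆ = z})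
    (hbr' : ∀ u ∈ m1, ∀ v ∈ m1, ⁅u, v⁆ ∈ m2)
    (hcentral : ∀ v ∈ m2, ∀ z : M, ⁅v, z⁆ = 0)
    (hdim : finrank ℂ m2 = 2)
    (hnd : ∀ y ∈ m1, (∀ z : M, ⁅y, z⁆ = 0) → y = 0) :
    ∃ y ∈ m1, y ≠ 0 ∧
      finrank ℂ (LinearMap.range (LieAlgebra.ad ℂ M y)) = 1 := by
  have : Nontrivial m1 := by
    refine Submodule.nontrivial_iff_ne_bot.mpr fun h => ?_
    have hm2 : m2 = ⊥ := by simp [hbr, h]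
    rw [hm2, finrank_bot] at hdim
    omega
  obtain ⟨y, hy, hrank⟩ :=
    (m1.restrictedBracket hbr').exists_ne_zero_finrank_range_apply_le_one le_rfl hdim
  refine ⟨y, y.2, by simpa using hy, le_antisymm ?_ ?_⟩
  · exact (finrank_range_ad_le_finrank_range_restrictedBracket hbr' hcompl hcentral y).trans hrank
  · refine Submodule.one_le_finrank_iff.mpr fun h => hy (Subtype.ext (hnd y y.2 fun z => ?_))
    simpa using congrArg (· z) (range_eq_bot.mp h)
end

section
/- For each n ≥ 2, consider the Lie algebra 𝔪 with basis X, Z₁, …, Z_{n-1} and only non-zero brackets [X, Z_i] = Z_{i+1} for i = 1, …, n-2, graded by deg X = -1, deg Z_i = -i. Then 𝔪 is a graded nilpotent Lie algebra generated by its degree -1 component, and any graded nilpotent Lie algebra 𝔫 of the same dimension n with dim 𝔫_{-1} = 2 and dim 𝔫_{-i} = 1 for 2 ≤ i ≤ n-1 that is generated by 𝔫_{-1} and contains an element y ∈ 𝔫_{-1} with rank(ad y) = 1 and [y, 𝔫_{-i}] = 0 for i ≥ 2 is isomorphic to 𝔪 as a graded Lie algebra. -/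
/-!
Pick `x ∈ 𝔫₋₁` with `[y, x] ≠ 0`: it exists because `ad y ≠ 0` vanishes on `𝔫₋ᵢ` for `i ≠ 1`.
Then `𝔫₋₁ = ⟨x, y⟩`, and generation by `𝔫₋₁` together with `[y, 𝔫₋ᵢ] = 0` gives
`𝔫₋ᵢ₋₁ = ⟨(ad x)ⁱ y⟩`. Since `y` commutes with every `(ad x)ⁱ y`, the Jacobi identity makes
these elements commute pairwise, so `x, y, (ad x) y, …` is a basis with the brackets of `𝔪`.
Two such algebras are isomorphic through the linear map matching these bases.
-/

open Module LinearMap Submodule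

section LieRing

variable {L : Type*} [LieRing L]

/-- The paper's `Z_{i+1}` for `X = x`, `Z₁ = y`. -/
def goursatSeq (x y : L) : ℕ → L
  | 0 => y
  | i + 1 => ⁅x, goursatSeq x y i⁆

@[simp]
theorem goursatSeq_zero (x y : L) : goursatSeq x y 0 = y := rfl

@[simp]
theorem goursatSeq_succ (x y : L) (i : ℕ) : goursatSeq x y (i + 1) = ⁅x, goursatSeq x y i⁆ := rfl

theorem lie_goursatSeq_goursatSeq {x y : L} (hy : ∀ i, ⁅y, goursatSeq x y i⁆ = 0) :
    ∀ i j, ⁅goursatSeq x y i, goursatSeq x y j⁆ = 0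
  | 0, j => hy j
  | i + 1, j => by
    rw [goursatSeq_succ, lie_lie, lie_goursatSeq_goursatSeq hy i j, ← goursatSeq_succ,
      lie_goursatSeq_goursatSeq hy i (j + 1), lie_zero, sub_zero]

end LieRing

theorem LinearMap.map_lie_of_basis {k L L' ι : Type*} [Field k] [LieRing L] [LieAlgebra k L]
    [LieRing L'] [LieAlgebra k L'] (f : L →ₗ[k] L') (b : Basis ι k L)
    (h : ∀ i j, f ⁅b i, b j⁆ = ⁅f (b i), f (b j)⁆) (u v : L) : f ⁅u, v⁆ = ⁅f u, f v⁆ := by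
  have hB : (LieAlgebra.ad k L : L →ₗ[k] Module.End k L).compr₂ f =
      ((LieAlgebra.ad k L' : L' →ₗ[k] Module.End k L') ∘ₗ f).compl₂ f :=
    LinearMap.ext_basis b b fun i j => by simpa using h i j
  simpa using LinearMap.congr_fun₂ hB u v

section Graded

variable {k L : Type*} [Field k] [LieRing L] [LieAlgebra k L] {m : ℕ → Submodule k L}

theorem goursatSeq_mem (hbr : ∀ i j, ∀ x ∈ m i, ∀ y ∈ m j, ⁅x, y⁆ ∈ m (i + j))
    {x y : L} (hx : x ∈ m 1) (hy : y ∈ m 1) : ∀ i, goursatSeq x y i ∈ m (i + 1)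
  | 0 => hy
  | i + 1 => by
    rw [add_comm (i + 1)]
    exact hbr 1 (i + 1) x hx _ (goursatSeq_mem hbr hx hy i)

theorem exists_mem_one_lie_ne_zero (hsum : DirectSum.IsInternal m) (h0 : m 0 = ⊥) {y : L}
    (hy : ∀ i, 2 ≤ i → ∀ z ∈ m i, ⁅y, z⁆ = 0)
    (hrk : finrank k (range (LieAlgebra.ad k L y)) = 1) : ∃ x ∈ m 1, ⁅y, x⁆ ≠ 0 := by
  by_contra! h
  have hker : ∀ i, m i ≤ ker (LieAlgebra.ad k L y)
    | 0 => h0 ▸ bot_le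
    | 1 => h
    | i + 2 => hy (i + 2) (by omega)
  have had : LieAlgebra.ad k L y = 0 :=
    ker_eq_top.mp (top_le_iff.mp (hsum.submodule_iSup_eq_top ▸ iSup_le hker))
  rw [had, range_zero, finrank_bot] at hrk
  exact zero_ne_one hrk

variable {x y : L}

theorem linearIndependent_pair_of_lie_ne_zero (h : ⁅y, x⁆ ≠ 0) :
    LinearIndependent k ![x, y] := by
  refine LinearIndependent.pair_iff.mpr fun s t hst => ?_
  have hs : s = 0 := by
    simpa [h] using congrArg (⁅y, ·⁆) hst
  subst hs
  have hy : y ≠ 0 := by rintro rfl; simp at h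
  simpa [hy] using hst

theorem eq_span_pair_of_lie_ne_zero (hdim : finrank k (m 1) = 2) (hx : x ∈ m 1) (hy : y ∈ m 1)
    (h : ⁅y, x⁆ ≠ 0) : m 1 = span k {x, y} := by
  have hle : span k {x, y} ≤ m 1 :=
    span_le.mpr (Set.insert_subset hx (Set.singleton_subset_iff.mpr hy))
  have hrank : finrank k (span k {x, y}) = 2 := by
    rw [← Matrix.range_cons_cons_empty x y ![], finrank_span_eq_card
      (linearIndependent_pair_of_lie_ne_zero h), Fintype.card_fin]
  have : FiniteDimensional k (m 1) := Module.finite_of_finrank_eq_succ hdim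
  exact (eq_of_le_of_finrank_le hle (hdim.trans hrank.symm).le).symm

theorem eq_span_goursatSeq (hbr : ∀ i j, ∀ x ∈ m i, ∀ y ∈ m j, ⁅x, y⁆ ∈ m (i + j))
    (hgen : ∀ i, 1 ≤ i → m (i + 1) = span k {z | ∃ u ∈ m 1, ∃ v ∈ m i, ⁅u, v⁆ = z})
    (hy2 : ∀ i, 2 ≤ i → ∀ z ∈ m i, ⁅y, z⁆ = 0) (h1 : m 1 = span k {x, y}) :
    ∀ i, m (i + 2) = span k {goursatSeq x y (i + 1)} := by
  have hx : x ∈ m 1 := h1 ▸ subset_span (Set.mem_insert x {y})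
  have hy : y ∈ m 1 := h1 ▸ subset_span (Set.mem_insert_of_mem x rfl)
  intro i
  refine le_antisymm ?_ (span_le.mpr (Set.singleton_subset_iff.mpr (goursatSeq_mem hbr hx hy _)))
  induction i with
  | zero =>
    rw [hgen 1 le_rfl, span_le]
    rintro _ ⟨u, hu, v, hv, rfl⟩
    rw [h1] at hu hv
    obtain ⟨a, b, rfl⟩ := mem_span_pair.mp hu
    obtain ⟨c, d, rfl⟩ := mem_span_pair.mp hv
    refine mem_span_singleton.mpr ⟨a * d - b * c, ?_⟩
    simp only [goursatSeq_succ, goursatSeq_zero, lie_add, add_lie, lie_smul, smul_lie, lie_self,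
      smul_zero, ← lie_skew x y]
    module
  | succ i ih =>
    rw [hgen (i + 2) (by omega), span_le]
    rintro _ ⟨u, hu, v, hv, rfl⟩
    rw [h1] at hu
    obtain ⟨a, b, rfl⟩ := mem_span_pair.mp hu
    obtain ⟨c, rfl⟩ := mem_span_singleton.mp (ih hv)
    have hyz := hy2 (i + 2) le_add_self _ (goursatSeq_mem hbr hx hy (i + 1))
    refine mem_span_singleton.mpr ⟨a * c, ?_⟩
    simp only [add_lie, smul_lie, lie_smul, hyz, smul_zero, add_zero, goursatSeq_succ _ _ (i + 1)]
    module

theorem goursatSeq_eq_zero (hbr : ∀ i j, ∀ x ∈ m i, ∀ y ∈ m j, ⁅x, y⁆ ∈ m (i + j)) {n : ℕ}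
    (htop : ∀ i, n ≤ i → m i = ⊥) (hx : x ∈ m 1) (hy : y ∈ m 1) {i : ℕ} (hi : n ≤ i + 1) :
    goursatSeq x y i = 0 := by
  simpa [htop _ hi] using goursatSeq_mem hbr hx hy i

theorem goursatSeq_ne_zero {n : ℕ} (hdim : ∀ i, 2 ≤ i → i ≤ n - 1 → finrank k (m i) = 1)
    (hspan : ∀ i, m (i + 2) = span k {goursatSeq x y (i + 1)}) (hy : y ≠ 0) :
    ∀ i, i + 1 < n → goursatSeq x y i ≠ 0
  | 0, _ => hy
  | i + 1, hi => fun h => by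
    have := hdim (i + 2) le_add_self (by omega)
    rw [hspan, h, span_zero_singleton, finrank_bot] at this
    exact zero_ne_one this

end Graded

/-- The paper's basis `X, Z₁, …, Z_{n-1}`. -/
def goursatFamily {L : Type*} [LieRing L] (n : ℕ) (x y : L) : Option (Fin (n - 1)) → L :=
  fun o => o.casesOn' x fun i => goursatSeq x y i

section Frame

variable {k L L' : Type*} [Field k] [LieRing L] [LieAlgebra k L] [LieRing L'] [LieAlgebra k L']

theorem goursatSeq_mem_span_goursatFamily {n : ℕ} {x y : L}
    (hzero : ∀ i, n ≤ i + 1 → goursatSeq x y i = 0) (i : ℕ) :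
    goursatSeq x y i ∈ span k (Set.range (goursatFamily n x y)) := by
  by_cases hi : i < n - 1
  · exact subset_span ⟨some ⟨i, hi⟩, rfl⟩
  · simp [hzero i (by omega)]

/-- The grading of `L` is that of the model algebra in the frame `X = x`, `Z₁ = y`. -/
structure IsGoursatFrame (n : ℕ) (m : ℕ → Submodule k L) (x y : L) : Prop where
  eq_bot : m 0 = ⊥
  eq_span_pair : m 1 = span k {x, y}
  eq_span_goursatSeq : ∀ i, m (i + 2) = span k {goursatSeq x y (i + 1)}
  lie_goursatSeq_goursatSeq : ∀ i j, ⁅goursatSeq x y i, goursatSeq x y j⁆ = 0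
  goursatSeq_eq_zero : ∀ i, n ≤ i + 1 → goursatSeq x y i = 0
  linearIndependent : LinearIndependent k (goursatFamily n x y)
  top_le_span : ⊤ ≤ span k (Set.range (goursatFamily n x y))

namespace IsGoursatFrame

variable {n : ℕ} {m : ℕ → Submodule k L} {m' : ℕ → Submodule k L'} {x y : L} {x' y' : L'}

noncomputable def basis (h : IsGoursatFrame n m x y) : Basis (Option (Fin (n - 1))) k L :=
  Basis.mk h.linearIndependent h.top_le_span

theorem exists_lieEquiv (h : IsGoursatFrame n m x y) (h' : IsGoursatFrame n m' x' y') :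
    ∃ e : L ≃ₗ⁅k⁆ L', ∀ i, map e.toLinearEquiv.toLinearMap (m i) = m' i := by
  let e := h.basis.equiv h'.basis (Equiv.refl _)
  have hfam : ∀ o, e (goursatFamily n x y o) = goursatFamily n x' y' o := fun o => by
    simpa [e, basis] using h.basis.equiv_apply o h'.basis (Equiv.refl _)
  have hx : e x = x' := hfam none
  have hz : ∀ i, e (goursatSeq x y i) = goursatSeq x' y' i := fun i => by
    by_cases hi : i < n - 1
    · exact hfam (some ⟨i, hi⟩)
    · rw [h.goursatSeq_eq_zero i (by omega), h'.goursatSeq_eq_zero i (by omega), map_zero]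
  have hlie : ∀ o o', e ⁅h.basis o, h.basis o'⁆ = ⁅e (h.basis o), e (h.basis o')⁆ := by
    rintro (_ | i) (_ | j) <;>
      simp only [basis, Basis.coe_mk, goursatFamily, Option.casesOn'_none, Option.casesOn'_some]
    · rw [lie_self, lie_self, map_zero]
    · rw [hx, hz, ← goursatSeq_succ, ← goursatSeq_succ, hz]
    · rw [hx, hz, ← lie_skew _ x, ← lie_skew _ x', map_neg, ← goursatSeq_succ,
        ← goursatSeq_succ, hz]
    · rw [hz, hz, h.lie_goursatSeq_goursatSeq, h'.lie_goursatSeq_goursatSeq, map_zero]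
  refine ⟨{ e with map_lie' := e.map_lie_of_basis h.basis hlie _ _ }, fun i => ?_⟩
  change map (e : L →ₗ[k] L') (m i) = m' i
  rcases i with _ | _ | i
  · rw [h.eq_bot, h'.eq_bot, Submodule.map_bot]
  · rw [h.eq_span_pair, h'.eq_span_pair, Submodule.map_span, Set.image_pair,
      LinearEquiv.coe_coe, hx, ← goursatSeq_zero x y, hz, goursatSeq_zero]
  · rw [h.eq_span_goursatSeq, h'.eq_span_goursatSeq, Submodule.map_span, Set.image_singleton,
      LinearEquiv.coe_coe, hz]

end IsGoursatFrame

end Frame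

theorem exists_isGoursatFrame {k L : Type*} [Field k] [LieRing L] [LieAlgebra k L] {n : ℕ}
    {m : ℕ → Submodule k L} (hsum : DirectSum.IsInternal m) (h0 : m 0 = ⊥)
    (htop : ∀ i, n ≤ i → m i = ⊥) (hbr : ∀ i j, ∀ x ∈ m i, ∀ y ∈ m j, ⁅x, y⁆ ∈ m (i + j))
    (hgen : ∀ i, 1 ≤ i → m (i + 1) = span k {z | ∃ u ∈ m 1, ∃ v ∈ m i, ⁅u, v⁆ = z})
    (hdim1 : finrank k (m 1) = 2) (hdim : ∀ i, 2 ≤ i → i ≤ n - 1 → finrank k (m i) = 1)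
    {y : L} (hy : y ∈ m 1) (hrk : finrank k (range (LieAlgebra.ad k L y)) = 1)
    (hy2 : ∀ i, 2 ≤ i → ∀ z ∈ m i, ⁅y, z⁆ = 0) : ∃ x, IsGoursatFrame n m x y := by
  obtain ⟨x, hx, hyx⟩ := exists_mem_one_lie_ne_zero hsum h0 hy2 hrk
  have h1 := eq_span_pair_of_lie_ne_zero hdim1 hx hy hyx
  have hspan := eq_span_goursatSeq hbr hgen hy2 h1
  have hzero (i : ℕ) (hi : n ≤ i + 1) := goursatSeq_eq_zero hbr htop hx hy hi
  have hyz : ∀ i, ⁅y, goursatSeq x y i⁆ = 0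
    | 0 => lie_self y
    | i + 1 => hy2 (i + 2) le_add_self _ (goursatSeq_mem hbr hx hy (i + 1))
  have hy0 : y ≠ 0 := by rintro rfl; simp at hyx
  refine ⟨x, h0, h1, hspan, lie_goursatSeq_goursatSeq hyz, hzero, ?_, ?_⟩
  · have hindep : LinearIndependent k fun i : Fin (n - 1) => goursatSeq x y i :=
      (hsum.submodule_iSupIndep.comp fun _ _ h => Fin.ext (Nat.succ_injective h)).linearIndependent
        _ (fun i => goursatSeq_mem hbr hx hy i)
        (fun i => goursatSeq_ne_zero hdim hspan hy0 i (by omega))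
    -- `ad y` kills every `Zᵢ` but not `x`
    have hker : span k (Set.range fun i : Fin (n - 1) => goursatSeq x y i) ≤
        ker (LieAlgebra.ad k L y) :=
      span_le.mpr (Set.range_subset_iff.mpr fun i => hyz i)
    exact hindep.option fun hmem => hyx (hker hmem)
  · rw [← hsum.submodule_iSup_eq_top]
    refine iSup_le fun i => ?_
    rcases i with _ | _ | i
    · exact h0 ▸ bot_le
    · rw [h1, span_le]
      exact Set.insert_subset (subset_span ⟨none, rfl⟩)
        (Set.singleton_subset_iff.mpr (goursatSeq_mem_span_goursatFamily hzero 0))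
    · rw [hspan, span_le, Set.singleton_subset_iff]
      exact goursatSeq_mem_span_goursatFamily hzero _

theorem stmt11_general {k : Type*} [Field k] (n : ℕ)
    {M N : Type*} [LieRing M] [LieAlgebra k M] [LieRing N] [LieAlgebra k N]
    (mM : ℕ → Submodule k M) (mN : ℕ → Submodule k N)
    -- `M` is a GNLA with the prescribed dimensions and a rank-one element
    (hsumM : DirectSum.IsInternal fun i => mM i)
    (h0M : mM 0 = ⊥) (htopM : ∀ i, n ≤ i → mM i = ⊥)
    (hbrM : ∀ i j, ∀ x ∈ mM i, ∀ y ∈ mM j, ⁅x, y⁆ ∈ mM (i + j))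
    (hgenM : ∀ i, 1 ≤ i →
      mM (i + 1) = Submodule.span k {z | ∃ u ∈ mM 1, ∃ v ∈ mM i, ⁅u, v⁆ = z})
    (hdim1M : finrank k (mM 1) = 2)
    (hdimM : ∀ i, 2 ≤ i → i ≤ n - 1 → finrank k (mM i) = 1)
    (yM : M) (hyM : yM ∈ mM 1)
    (hrkM : finrank k (LinearMap.range (LieAlgebra.ad k M yM)) = 1)
    (hyM2 : ∀ i, 2 ≤ i → ∀ z ∈ mM i, ⁅yM, z⁆ = 0)
    -- `N` is a GNLA with the same data
    (hsumN : DirectSum.IsInternal fun i => mN i)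
    (h0N : mN 0 = ⊥) (htopN : ∀ i, n ≤ i → mN i = ⊥)
    (hbrN : ∀ i j, ∀ x ∈ mN i, ∀ y ∈ mN j, ⁅x, y⁆ ∈ mN (i + j))
    (hgenN : ∀ i, 1 ≤ i →
      mN (i + 1) = Submodule.span k {z | ∃ u ∈ mN 1, ∃ v ∈ mN i, ⁅u, v⁆ = z})
    (hdim1N : finrank k (mN 1) = 2)
    (hdimN : ∀ i, 2 ≤ i → i ≤ n - 1 → finrank k (mN i) = 1)
    (yN : N) (hyN : yN ∈ mN 1)
    (hrkN : finrank k (LinearMap.range (LieAlgebra.ad k N yN)) = 1)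
    (hyN2 : ∀ i, 2 ≤ i → ∀ z ∈ mN i, ⁅yN, z⁆ = 0) :
    ∃ e : M ≃ₗ⁅k⁆ N, ∀ i,
      Submodule.map (e.toLinearEquiv.toLinearMap) (mM i) = mN i := by
  obtain ⟨_, hM⟩ := exists_isGoursatFrame hsumM h0M htopM hbrM hgenM hdim1M hdimM hyM hrkM hyM2
  obtain ⟨_, hN⟩ := exists_isGoursatFrame hsumN h0N htopN hbrN hgenN hdim1N hdimN hyN hrkN hyN2
  exact hM.exists_lieEquiv hN

/-- the symbol of the Goursat distribution (`[X, Z_i] = Z_{i+1}`)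
is, up to graded isomorphism, the unique `n`-dimensional graded nilpotent Lie
algebra with `dim 𝔫₋₁ = 2`, `dim 𝔫₋ᵢ = 1` for `2 ≤ i ≤ n-1`, generated by
`𝔫₋₁` and possessing `y ∈ 𝔫₋₁` with `rank (ad y) = 1` and `⁅y, 𝔫₋ᵢ⁆ = 0` for
`i ≥ 2`.  Formally: any two such graded Lie algebras (and the Goursat symbol
is one of them) are isomorphic by a grading-preserving Lie isomorphism. -/
theorem stmt11 {k : Type*} [Field k] [CharZero k] (n : ℕ) (hn : 2 ≤ n)
    {M N : Type*} [LieRing M] [LieAlgebra k M] [LieRing N] [LieAlgebra k N]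
    (mM : ℕ → Submodule k M) (mN : ℕ → Submodule k N)
    -- `M` is a GNLA with the prescribed dimensions and a rank-one element
    (hsumM : DirectSum.IsInternal fun i => mM i)
    (h0M : mM 0 = ⊥) (htopM : ∀ i, n ≤ i → mM i = ⊥)
    (hbrM : ∀ i j, ∀ x ∈ mM i, ∀ y ∈ mM j, ⁅x, y⁆ ∈ mM (i + j))
    (hgenM : ∀ i, 1 ≤ i →
      mM (i + 1) = Submodule.span k {z | ∃ u ∈ mM 1, ∃ v ∈ mM i, ⁅u, v⁆ = z})
    (hdim1M : finrank k (mM 1) = 2)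
    (hdimM : ∀ i, 2 ≤ i → i ≤ n - 1 → finrank k (mM i) = 1)
    (yM : M) (hyM : yM ∈ mM 1)
    (hrkM : finrank k (LinearMap.range (LieAlgebra.ad k M yM)) = 1)
    (hyM2 : ∀ i, 2 ≤ i → ∀ z ∈ mM i, ⁅yM, z⁆ = 0)
    -- `N` is a GNLA with the same data
    (hsumN : DirectSum.IsInternal fun i => mN i)
    (h0N : mN 0 = ⊥) (htopN : ∀ i, n ≤ i → mN i = ⊥)
    (hbrN : ∀ i j, ∀ x ∈ mN i, ∀ y ∈ mN j, ⁅x, y⁆ ∈ mN (i + j))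
    (hgenN : ∀ i, 1 ≤ i →
      mN (i + 1) = Submodule.span k {z | ∃ u ∈ mN 1, ∃ v ∈ mN i, ⁅u, v⁆ = z})
    (hdim1N : finrank k (mN 1) = 2)
    (hdimN : ∀ i, 2 ≤ i → i ≤ n - 1 → finrank k (mN i) = 1)
    (yN : N) (hyN : yN ∈ mN 1)
    (hrkN : finrank k (LinearMap.range (LieAlgebra.ad k N yN)) = 1)
    (hyN2 : ∀ i, 2 ≤ i → ∀ z ∈ mN i, ⁅yN, z⁆ = 0) :
    ∃ e : M ≃ₗ⁅k⁆ N, ∀ i,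
      Submodule.map (e.toLinearEquiv.toLinearMap) (mM i) = mN i :=
  stmt11_general n mM mN hsumM h0M htopM hbrM hgenM hdim1M hdimM yM hyM hrkM hyM2 hsumN h0N htopN
    hbrN hgenN hdim1N hdimN yN hyN hrkN hyN2
end

section
/- Let m ≥ 1, and let 𝔥₀(ℳ_m) be the set of complex (2m+1)×(2m+1) matrices X such that XᵗB + BX = 0 for every skew-symmetric matrix B in the pencil ℳ_m (the Kronecker block with minimal index m). Then every element of 𝔥₀(ℳ_m) has the block form [[xE_{m+1}, Y],[0, -xE_m]] with x ∈ ℂ and Y an (m+1)×m matrix with constant entries along each diagonal (Y_{ij} = Y_{i+1,j+1}). In particular, 𝔥₀(ℳ_m) is a Lie subalgebra of 𝔤𝔩(2m+1,ℂ) containing a nilpotent element of rank 1. -/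
/-!
Write `X = [[P, Y], [Q, T]]`. For `B = [[0, A], [-Aᵀ, 0]]` the equation `XᵀB + BX = 0` splits into
`A Q` symmetric, `Pᵀ A + A T = 0` and `Yᵀ A` symmetric. The two matrices `A` of the pencil carry
their ones on adjacent antidiagonals, so comparing the two instances of each equation shifts the
indices by one: `Q`, `T` and `Y` are constant along diagonals. At the border rows and columns one
of the two antidiagonals has no entry, which kills `Q` and every off-diagonal entry of `T`, so
`T = t • 1`; then `(Pᵀ + t) A = 0` for both `A`, whose columns together exhaust the standard basis,
so `P = -t • 1`. The solution set is an intersection of two Lie algebras of skew-adjoint matrices,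
and the outer product of the indicator vectors of the two blocks is a nilpotent rank-one member.
-/

open Matrix

namespace Matrix

section Blocks

variable {R : Type*} [CommRing R]

theorem isSkewAdjoint_iff_transpose_mul_add_mul_eq_zero {n : Type*} [Fintype n]
    (J X : Matrix n n R) :
    J.IsSkewAdjoint X ↔ Xᵀ * J + J * X = 0 := by
  rw [Matrix.IsSkewAdjoint, Matrix.IsAdjointPair, mul_neg, ← add_eq_zero_iff_eq_neg]

theorem fromBlocks_transpose_mul_add_mul_eq_zero_iff {n o : Type*} [Fintype n] [Fintype o]
    (P : Matrix n n R) (Y : Matrix n o R) (Q : Matrix o n R) (T : Matrix o o R)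
    (A : Matrix n o R) :
    (fromBlocks P Y Q T)ᵀ * fromBlocks 0 A (-Aᵀ) 0 + fromBlocks 0 A (-Aᵀ) 0 * fromBlocks P Y Q T
        = 0 ↔ (A * Q).IsSymm ∧ Pᵀ * A + A * T = 0 ∧ (Yᵀ * A).IsSymm := by
  rw [IsSymm, IsSymm, fromBlocks_transpose, fromBlocks_multiply, fromBlocks_multiply,
    fromBlocks_add, ← fromBlocks_zero, fromBlocks_inj]
  simp only [Matrix.mul_zero, Matrix.zero_mul, zero_add, add_zero, Matrix.mul_neg, Matrix.neg_mul,
    transpose_mul, transpose_transpose]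
  have h21 : -(Tᵀ * Aᵀ) + -(Aᵀ * P) = -(Pᵀ * A + A * T)ᵀ := by
    rw [transpose_add, transpose_mul, transpose_mul, transpose_transpose, neg_add, add_comm]
  rw [h21, neg_eq_zero, transpose_eq_zero, neg_add_eq_zero, add_neg_eq_zero,
    eq_comm (a := Yᵀ * A)]
  tauto

end Blocks

section Antidiagonal

variable {R : Type*} [Semiring R] {p q : ℕ}

variable (R) in
def antidiag (p q d : ℕ) : Matrix (Fin p) (Fin q) R :=
  of fun i j => if (i : ℕ) + j = d then 1 else 0

theorem antidiag_mul_apply {ι : Type*} {d : ℕ} (M : Matrix (Fin q) ι R) {i : Fin p} {k : Fin q}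
    (h : (i : ℕ) + k = d) (j : ι) : (antidiag R p q d * M) i j = M k j := by
  rw [mul_apply, Finset.sum_eq_single k]
  · simp [antidiag, h]
  · intro k' _ hk'
    simp only [antidiag, of_apply, ite_mul, one_mul, zero_mul]
    exact if_neg fun h' => hk' (Fin.ext (by omega))
  · simp

theorem antidiag_mul_apply_eq_zero {ι : Type*} {d : ℕ} (M : Matrix (Fin q) ι R) {i : Fin p}
    (h : ∀ k : Fin q, (i : ℕ) + k ≠ d) (j : ι) : (antidiag R p q d * M) i j = 0 := by
  rw [mul_apply]
  exact Finset.sum_eq_zero fun k _ => by simp [antidiag, h k]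

theorem mul_antidiag_apply {ι : Type*} {d : ℕ} (M : Matrix ι (Fin p) R) {k : Fin p} {j : Fin q}
    (h : (k : ℕ) + j = d) (i : ι) : (M * antidiag R p q d) i j = M i k := by
  rw [mul_apply, Finset.sum_eq_single k]
  · simp [antidiag, h]
  · intro k' _ hk'
    simp only [antidiag, of_apply, mul_ite, mul_one, mul_zero]
    exact if_neg fun h' => hk' (Fin.ext (by omega))
  · simp

theorem antidiag_transpose (p q d : ℕ) :
    (antidiag R p q d)ᵀ = antidiag R q p d := by
  ext i j
  simp [antidiag, add_comm]

theorem isSymm_ones_mul_antidiag {d : ℕ}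
    (hd : ∀ j : Fin q, ∃ k : Fin p, (k : ℕ) + j = d) :
    ((of fun _ _ => 1 : Matrix (Fin q) (Fin p) R) * antidiag R p q d).IsSymm := by
  have hones :
      (of fun _ _ => 1 : Matrix (Fin q) (Fin p) R) * antidiag R p q d = of fun _ _ => 1 := by
    ext i j
    obtain ⟨k, hk⟩ := hd j
    rw [mul_antidiag_apply _ hk]
    rfl
  rw [hones]
  rfl

end Antidiagonal

section Toeplitz

variable {α : Type*} {p q : ℕ}

def IsToeplitz (M : Matrix (Fin p) (Fin q) α) : Prop :=
  ∀ (i : Fin p) (j : Fin q) (hi : (i : ℕ) + 1 < p) (hj : (j : ℕ) + 1 < q),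
    M ⟨i + 1, hi⟩ ⟨j + 1, hj⟩ = M i j

theorem IsToeplitz.apply_eq {M : Matrix (Fin p) (Fin q) α} (hM : M.IsToeplitz)
    {i i' : Fin p} {j j' : Fin q} (h : (i : ℕ) + j' = i' + j) : M i j = M i' j' := by
  wlog hii' : (i : ℕ) ≤ i' generalizing i i' j j'
  · exact (this h.symm (by omega)).symm
  obtain ⟨k, hk⟩ := Nat.exists_eq_add_of_le hii'
  induction k generalizing i' j' with
  | zero => exact congrArg₂ M (Fin.ext (by omega)) (Fin.ext (by omega))
  | succ k ih =>
    have hi : (i : ℕ) + k < p := by omega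
    have hj : (j : ℕ) + k < q := by omega
    rw [ih (i' := ⟨i + k, hi⟩) (j' := ⟨j + k, hj⟩) (by simp; omega) (by simp) rfl,
      ← hM ⟨i + k, hi⟩ ⟨j + k, hj⟩ (by simp; omega) (by simp; omega)]
    exact congrArg₂ M (Fin.ext (by simp; omega)) (Fin.ext (by simp; omega))

theorem IsToeplitz.eq_smul_one [Semiring α] {n : ℕ} {M : Matrix (Fin (n + 1)) (Fin (n + 1)) α}
    (hM : M.IsToeplitz) (hfirst : ∀ j ≠ 0, M 0 j = 0)
    (hlast : ∀ j ≠ Fin.last n, M (Fin.last n) j = 0) : M = M 0 0 • 1 := by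
  ext i j
  rcases lt_trichotomy (i : ℕ) j with hij | hij | hij
  · rw [hM.apply_eq (i' := 0) (j' := ⟨j - i, by omega⟩) (by simp; omega),
      hfirst _ (Fin.ne_of_val_ne (by simp; omega)), smul_apply, one_apply_ne (by omega), smul_zero]
  · rw [hM.apply_eq (i' := 0) (j' := 0) (by simp; omega), Fin.ext hij, smul_apply, one_apply_eq,
      smul_eq_mul, mul_one]
  · rw [hM.apply_eq (i' := Fin.last n) (j' := ⟨j + n - i, by omega⟩) (by simp; omega),
      hlast _ (Fin.ne_of_val_ne (by simp; omega)), smul_apply, one_apply_ne (by omega), smul_zero]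

theorem IsToeplitz.eq_zero [Zero α] {n : ℕ} {M : Matrix (Fin (n + 1)) (Fin (n + 2)) α}
    (hM : M.IsToeplitz) (hfirst : ∀ i, M i 0 = 0) (hlast : ∀ i, M i (Fin.last (n + 1)) = 0) :
    M = 0 := by
  ext i j
  by_cases hij : (j : ℕ) ≤ i
  · rw [hM.apply_eq (i' := ⟨i - j, by omega⟩) (j' := 0) (by simp; omega), hfirst, zero_apply]
  · rw [hM.apply_eq (i' := ⟨i + (n + 1) - j, by omega⟩) (j' := Fin.last (n + 1)) (by simp; omega),
      hlast, zero_apply]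

end Toeplitz

section Pencil

variable {R : Type*} [CommRing R] {p q d : ℕ}

section Intertwining

variable {P : Matrix (Fin p) (Fin p) R} {T : Matrix (Fin q) (Fin q) R}
  (h : Pᵀ * antidiag R p q d + antidiag R p q d * T = 0)
include h

theorem add_eq_zero_of_transpose_mul_antidiag_add {a i : Fin p} {j b : Fin q}
    (ha : (a : ℕ) + j = d) (hi : (i : ℕ) + b = d) : P a i + T b j = 0 := by
  simpa [mul_antidiag_apply Pᵀ ha, antidiag_mul_apply T hi] using congrFun₂ h i j

theorem eq_zero_of_transpose_mul_antidiag_add {a i : Fin p} {j : Fin q}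
    (ha : (a : ℕ) + j = d) (hi : ∀ b : Fin q, (i : ℕ) + b ≠ d) : P a i = 0 := by
  simpa [mul_antidiag_apply Pᵀ ha, antidiag_mul_apply_eq_zero T hi] using congrFun₂ h i j

end Intertwining

section Symmetric

variable {K : Matrix (Fin q) (Fin p) R} (h : (antidiag R p q d * K).IsSymm)
include h

theorem apply_eq_apply_of_isSymm_antidiag_mul {i i' : Fin p} {b b' : Fin q}
    (hb : (i : ℕ) + b = d) (hb' : (i' : ℕ) + b' = d) : K b i' = K b' i := by
  simpa [antidiag_mul_apply K hb, antidiag_mul_apply K hb'] using (congrFun₂ h i i').symm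

theorem apply_eq_zero_of_isSymm_antidiag_mul {i i' : Fin p} {b : Fin q}
    (hb : (i : ℕ) + b = d) (hi' : ∀ b' : Fin q, (i' : ℕ) + b' ≠ d) : K b i' = 0 := by
  simpa [antidiag_mul_apply K hb, antidiag_mul_apply_eq_zero K hi'] using (congrFun₂ h i i').symm

end Symmetric

theorem isToeplitz_of_isSymm_antidiag_mul {e : ℕ} (hp : e < p) (hp' : p ≤ e + 2) (hq : e < q)
    (hq' : q ≤ e + 2) {K : Matrix (Fin q) (Fin p) R} (h₁ : (antidiag R p q e * K).IsSymm)
    (h₂ : (antidiag R p q (e + 1) * K).IsSymm) : K.IsToeplitz := by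
  intro u v hu hv
  have hu' : e - u < p := by omega
  have hv' : e - v < q := by omega
  rw [apply_eq_apply_of_isSymm_antidiag_mul h₂ (i := ⟨e - u, hu'⟩) (b' := ⟨e - v, hv'⟩)
      (by simp; omega) (by simp; omega),
    apply_eq_apply_of_isSymm_antidiag_mul h₁ (i := ⟨e - u, hu'⟩) (b' := ⟨e - v, hv'⟩) (b := u)
      (i' := v) (by simp; omega) (by simp; omega)]

variable {n : ℕ}

theorem eq_zero_of_isSymm_antidiag_mul {Q : Matrix (Fin (n + 1)) (Fin (n + 2)) R}
    (h₁ : (antidiag R (n + 2) (n + 1) n * Q).IsSymm)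
    (h₂ : (antidiag R (n + 2) (n + 1) (n + 1) * Q).IsSymm) : Q = 0 := by
  refine (isToeplitz_of_isSymm_antidiag_mul (by omega) le_rfl (by omega) (by omega) h₁ h₂).eq_zero
    (fun b => ?_) (fun b => ?_)
  · exact apply_eq_zero_of_isSymm_antidiag_mul h₂ (i := ⟨n + 1 - b, by omega⟩) (by simp)
      (fun b' => by simp; omega)
  · exact apply_eq_zero_of_isSymm_antidiag_mul h₁ (i := ⟨n - b, by omega⟩) (by simp; omega)
      (fun b' => by simp; omega)

theorem isToeplitz_of_isSymm_transpose_mul_antidiag {Y : Matrix (Fin (n + 2)) (Fin (n + 1)) R}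
    (h₁ : (Yᵀ * antidiag R (n + 2) (n + 1) n).IsSymm)
    (h₂ : (Yᵀ * antidiag R (n + 2) (n + 1) (n + 1)).IsSymm) : Y.IsToeplitz := by
  have h₁' := h₁.transpose
  have h₂' := h₂.transpose
  rw [transpose_mul, transpose_transpose, antidiag_transpose] at h₁' h₂'
  exact isToeplitz_of_isSymm_antidiag_mul (by omega) (by omega) (by omega) le_rfl h₁' h₂'

theorem eq_zero_of_mul_antidiag_eq_zero {ι : Type*} {N : Matrix ι (Fin (n + 2)) R}
    (h₁ : N * antidiag R (n + 2) (n + 1) n = 0) (h₂ : N * antidiag R (n + 2) (n + 1) (n + 1) = 0) :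
    N = 0 := by
  ext i a
  by_cases ha : (a : ℕ) ≤ n
  · rw [← mul_antidiag_apply N (k := a) (j := (⟨n - a, by omega⟩ : Fin (n + 1))) (d := n)
      (by simp; omega) i, h₁, zero_apply, zero_apply]
  · rw [← mul_antidiag_apply N (k := a) (j := (0 : Fin (n + 1))) (d := n + 1)
      (by simp; omega) i, h₂, zero_apply, zero_apply]

theorem eq_smul_one_of_transpose_mul_antidiag_add {P : Matrix (Fin (n + 2)) (Fin (n + 2)) R}
    {T : Matrix (Fin (n + 1)) (Fin (n + 1)) R}
    (h₁ : Pᵀ * antidiag R (n + 2) (n + 1) n + antidiag R (n + 2) (n + 1) n * T = 0)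
    (h₂ : Pᵀ * antidiag R (n + 2) (n + 1) (n + 1) + antidiag R (n + 2) (n + 1) (n + 1) * T = 0) :
    T = T 0 0 • 1 := by
  have hT : T.IsToeplitz := fun b j hb hj => by
    have e₁ := add_eq_zero_of_transpose_mul_antidiag_add h₁ (a := ⟨n - j, by omega⟩)
      (i := ⟨n - b, by omega⟩) (j := j) (b := b) (by simp; omega) (by simp; omega)
    have e₂ := add_eq_zero_of_transpose_mul_antidiag_add h₂ (a := ⟨n - j, by omega⟩)
      (i := ⟨n - b, by omega⟩) (j := ⟨j + 1, hj⟩) (b := ⟨b + 1, hb⟩) (by simp; omega)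
      (by simp; omega)
    linear_combination e₂ - e₁
  have hfirst : ∀ c ≠ 0, T 0 c = 0 := fun c hc => by
    have hc : (c : ℕ) ≠ 0 := Fin.val_ne_iff.mpr hc
    have e₁ := add_eq_zero_of_transpose_mul_antidiag_add h₂ (a := ⟨n + 1 - c, by omega⟩)
      (i := Fin.last (n + 1)) (j := c) (b := 0) (by simp) (by simp)
    have e₂ := eq_zero_of_transpose_mul_antidiag_add h₁ (a := ⟨n + 1 - c, by omega⟩)
      (i := Fin.last (n + 1)) (j := ⟨c - 1, by omega⟩) (by simp; omega) (fun b => by simp; omega)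
    linear_combination e₁ - e₂
  have hlast : ∀ c ≠ Fin.last n, T (Fin.last n) c = 0 := fun c hc => by
    have hc : (c : ℕ) < n := Fin.val_lt_last hc
    have e₁ := add_eq_zero_of_transpose_mul_antidiag_add h₁ (a := ⟨n - c, by omega⟩)
      (i := 0) (j := c) (b := Fin.last n) (by simp; omega) (by simp)
    have e₂ := eq_zero_of_transpose_mul_antidiag_add h₂ (a := ⟨n - c, by omega⟩)
      (i := 0) (j := ⟨c + 1, by omega⟩) (by simp; omega) (fun b => by simp; omega)
    linear_combination e₁ - e₂
  exact hT.eq_smul_one hfirst hlast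

theorem exists_eq_smul_one_of_transpose_mul_antidiag_add {P : Matrix (Fin (n + 2)) (Fin (n + 2)) R}
    {T : Matrix (Fin (n + 1)) (Fin (n + 1)) R}
    (h₁ : Pᵀ * antidiag R (n + 2) (n + 1) n + antidiag R (n + 2) (n + 1) n * T = 0)
    (h₂ : Pᵀ * antidiag R (n + 2) (n + 1) (n + 1) + antidiag R (n + 2) (n + 1) (n + 1) * T = 0) :
    ∃ x : R, P = x • 1 ∧ T = (-x) • 1 := by
  obtain ⟨t, rfl⟩ : ∃ t, T = t • 1 := ⟨_, eq_smul_one_of_transpose_mul_antidiag_add h₁ h₂⟩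
  have hP : Pᵀ + t • 1 = 0 := by
    refine eq_zero_of_mul_antidiag_eq_zero ?_ ?_
    · rw [← h₁, Matrix.add_mul, Matrix.smul_mul, Matrix.mul_smul, Matrix.one_mul, Matrix.mul_one]
    · rw [← h₂, Matrix.add_mul, Matrix.smul_mul, Matrix.mul_smul, Matrix.one_mul, Matrix.mul_one]
  refine ⟨-t, ?_, by rw [neg_neg]⟩
  simpa using congrArg transpose (eq_neg_of_add_eq_zero_left hP)

end Pencil

theorem rank_vecMulVec_eq_one {K m n : Type*} [Field K] [Fintype m] [Fintype n] [DecidableEq n]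
    {u : m → K} {v : n → K} (hu : u ≠ 0) (hv : v ≠ 0) : (vecMulVec u v).rank = 1 := by
  refine le_antisymm (rank_vecMulVec_le u v) (Nat.one_le_iff_ne_zero.2 fun h => ?_)
  obtain ⟨i, hi⟩ := Function.ne_iff.1 hu
  obtain ⟨j, hj⟩ := Function.ne_iff.1 hv
  rw [rank, Submodule.finrank_eq_zero, LinearMap.range_eq_bot] at h
  have := congrFun (LinearMap.congr_fun h (Pi.single j 1)) i
  simp only [mulVecLin_apply, mulVec_single_one, LinearMap.zero_apply, Pi.zero_apply, col_apply,
    vecMulVec_apply] at this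
  exact mul_ne_zero hi hj this

theorem isNilpotent_vecMulVec {R n : Type*} [Semiring R] [Fintype n] [DecidableEq n] {u v : n → R}
    (h : v ⬝ᵥ u = 0) : IsNilpotent (vecMulVec u v) :=
  ⟨2, by rw [pow_two, vecMulVec_mul_vecMulVec, h, zero_smul, vecMulVec_zero]⟩

section Kronecker

variable {R : Type*} [CommRing R] {n : ℕ}

/- With `m = n + 1`, the pencil `ℳ_m` is
`λ • kroneckerBlock R n n + μ • kroneckerBlock R n (n + 1)`. -/
variable (R) in
def kroneckerBlock (n d : ℕ) : Matrix (Fin (n + 2) ⊕ Fin (n + 1)) (Fin (n + 2) ⊕ Fin (n + 1)) R :=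
  fromBlocks 0 (antidiag R (n + 2) (n + 1) d) (-(antidiag R (n + 2) (n + 1) d)ᵀ) 0

section LieAlgebra

attribute [local instance] LieRing.ofAssociativeRing

variable (R) in
def kroneckerAlgebra (n : ℕ) :
    LieSubalgebra R (Matrix (Fin (n + 2) ⊕ Fin (n + 1)) (Fin (n + 2) ⊕ Fin (n + 1)) R) :=
  skewAdjointMatricesLieSubalgebra (kroneckerBlock R n n) ⊓
    skewAdjointMatricesLieSubalgebra (kroneckerBlock R n (n + 1))

theorem mem_kroneckerAlgebra
    {X : Matrix (Fin (n + 2) ⊕ Fin (n + 1)) (Fin (n + 2) ⊕ Fin (n + 1)) R} :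
    X ∈ kroneckerAlgebra R n ↔ Xᵀ * kroneckerBlock R n n + kroneckerBlock R n n * X = 0 ∧
      Xᵀ * kroneckerBlock R n (n + 1) + kroneckerBlock R n (n + 1) * X = 0 := by
  simp only [kroneckerAlgebra, LieSubalgebra.mem_inf, mem_skewAdjointMatricesLieSubalgebra,
    mem_skewAdjointMatricesSubmodule, isSkewAdjoint_iff_transpose_mul_add_mul_eq_zero]

theorem mul_sub_mul_mem_kroneckerAlgebra
    {X Y : Matrix (Fin (n + 2) ⊕ Fin (n + 1)) (Fin (n + 2) ⊕ Fin (n + 1)) R}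
    (hX : X ∈ kroneckerAlgebra R n) (hY : Y ∈ kroneckerAlgebra R n) :
    X * Y - Y * X ∈ kroneckerAlgebra R n :=
  Ring.lie_def X Y ▸ (kroneckerAlgebra R n).lie_mem hX hY

end LieAlgebra

theorem eq_fromBlocks_of_mem_kroneckerAlgebra
    {X : Matrix (Fin (n + 2) ⊕ Fin (n + 1)) (Fin (n + 2) ⊕ Fin (n + 1)) R}
    (hX : X ∈ kroneckerAlgebra R n) : ∃ (x : R) (Y : Matrix (Fin (n + 2)) (Fin (n + 1)) R),
      Y.IsToeplitz ∧ X = fromBlocks (x • 1) Y 0 ((-x) • 1) := by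
  rw [mem_kroneckerAlgebra, ← fromBlocks_toBlocks X, kroneckerBlock, kroneckerBlock,
    fromBlocks_transpose_mul_add_mul_eq_zero_iff,
    fromBlocks_transpose_mul_add_mul_eq_zero_iff] at hX
  obtain ⟨⟨hQ₁, hPT₁, hY₁⟩, hQ₂, hPT₂, hY₂⟩ := hX
  obtain ⟨x, hP, hT⟩ := exists_eq_smul_one_of_transpose_mul_antidiag_add hPT₁ hPT₂
  refine ⟨x, X.toBlocks₁₂, isToeplitz_of_isSymm_transpose_mul_antidiag hY₁ hY₂, ?_⟩
  rw [← hP, ← hT, ← eq_zero_of_isSymm_antidiag_mul hQ₁ hQ₂, fromBlocks_toBlocks]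

theorem exists_isNilpotent_rank_one_mem_kroneckerAlgebra {K : Type*} [Field K] (n : ℕ) :
    ∃ N ∈ kroneckerAlgebra K n, IsNilpotent N ∧ N.rank = 1 := by
  set u : Fin (n + 2) ⊕ Fin (n + 1) → K := Sum.elim 1 0
  set v : Fin (n + 2) ⊕ Fin (n + 1) → K := Sum.elim 0 1
  have hN : vecMulVec u v = fromBlocks 0 (of fun _ _ => 1) 0 0 := by
    ext (i | i) (j | j) <;> simp [u, v, vecMulVec]
  refine ⟨vecMulVec u v, ?_, isNilpotent_vecMulVec (by simp [u, v]), rank_vecMulVec_eq_one ?_ ?_⟩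
  · rw [hN, mem_kroneckerAlgebra, kroneckerBlock, kroneckerBlock,
      fromBlocks_transpose_mul_add_mul_eq_zero_iff, fromBlocks_transpose_mul_add_mul_eq_zero_iff]
    simp only [Matrix.mul_zero, Matrix.zero_mul, add_zero, transpose_zero, isSymm_zero, true_and]
    exact ⟨isSymm_ones_mul_antidiag fun j => ⟨⟨n - j, by omega⟩, by simp; omega⟩,
      isSymm_ones_mul_antidiag fun j => ⟨⟨n + 1 - j, by omega⟩, by simp⟩⟩
  · exact fun h => by simpa [u] using congrFun h (Sum.inl 0)
  · exact fun h => by simpa [v] using congrFun h (Sum.inr 0)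

end Kronecker

end Matrix

/-- for `m ≥ 1`, the algebra `𝔥₀(ℳ_m)` of complex
`(2m+1)×(2m+1)` matrices `X` with `Xᵀ B + B X = 0` for both skew-symmetric
matrices `Bl, Bm` of the Kronecker pencil `ℳ_m` consists exactly of the
block matrices `[[x·E_{m+1}, Y], [0, -x·E_m]]` with `x ∈ ℂ` and `Y` constant
along diagonals; it is a Lie subalgebra of `𝔤𝔩(2m+1, ℂ)` containing a
nilpotent element of rank 1. -/
theorem stmt15 (m : ℕ) (hm : 1 ≤ m)
    (Al Am : Matrix (Fin (m + 1)) (Fin m) ℂ)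
    (hAl : ∀ i j, Al i j = if (i : ℕ) + (j : ℕ) = m - 1 then 1 else 0)
    (hAm : ∀ i j, Am i j = if (i : ℕ) + (j : ℕ) = m then 1 else 0)
    (Bl Bm : Matrix (Fin (m + 1) ⊕ Fin m) (Fin (m + 1) ⊕ Fin m) ℂ)
    (hBl : Bl = Matrix.fromBlocks 0 Al (-Alᵀ) 0)
    (hBm : Bm = Matrix.fromBlocks 0 Am (-Amᵀ) 0)
    (S : Set (Matrix (Fin (m + 1) ⊕ Fin m) (Fin (m + 1) ⊕ Fin m) ℂ))
    (hS : S = {X | Xᵀ * Bl + Bl * X = 0 ∧ Xᵀ * Bm + Bm * X = 0}) :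
    -- every element of `𝔥₀(ℳ_m)` has the stated block form
    (∀ X ∈ S, ∃ (x : ℂ) (Y : Matrix (Fin (m + 1)) (Fin m) ℂ),
      (∀ (i : Fin (m + 1)) (j : Fin m)
          (hi : (i : ℕ) + 1 < m + 1) (hj : (j : ℕ) + 1 < m),
        Y ⟨(i : ℕ) + 1, hi⟩ ⟨(j : ℕ) + 1, hj⟩ = Y i j) ∧
      X = Matrix.fromBlocks (x • 1) Y 0 ((-x) • 1)) ∧
    -- `𝔥₀(ℳ_m)` is a Lie subalgebra of `𝔤𝔩(2m+1,ℂ)`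
    (∀ X ∈ S, ∀ Y ∈ S, X + Y ∈ S ∧ (∀ c : ℂ, c • X ∈ S) ∧ X * Y - Y * X ∈ S) ∧
    -- it contains a nilpotent element of rank 1
    (∃ N ∈ S, IsNilpotent N ∧ N.rank = 1) := by
  obtain ⟨n, rfl⟩ := Nat.exists_eq_add_of_le' hm
  have hAl' : Al = antidiag ℂ (n + 2) (n + 1) n := by
    ext i j
    simp [hAl, antidiag]
  have hAm' : Am = antidiag ℂ (n + 2) (n + 1) (n + 1) := by
    ext i j
    simp [hAm, antidiag]
  obtain rfl : S = kroneckerAlgebra ℂ n := by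
    ext X
    rw [hS, hBl, hBm, hAl', hAm']
    exact mem_kroneckerAlgebra.symm
  exact ⟨fun X hX => eq_fromBlocks_of_mem_kroneckerAlgebra hX,
    fun X hX Y hY => ⟨add_mem hX hY, fun c => SMulMemClass.smul_mem c hX,
      mul_sub_mul_mem_kroneckerAlgebra hX hY⟩,
    exists_isNilpotent_rank_one_mem_kroneckerAlgebra n⟩
end
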